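/- arXiv:1404.4064 — 3 statements merged into one kernel-verified Lean document; each statement's English description precedes it below -/
import Mathlib

section
/- With the notation of the structure theorem (m distinct K_n-graphs freely contained in a B(n+1)-configuration M, Z_i the private vertices of G_i, q^{i,j} the common vertex of G_i and G_j): for each pair i ≠ j, the sets Z_i ∪ {q^{i,j}} and Z_j ∪ {q^{i,j}} are two K_{n-m+2}-graphs freely contained in M which share all their sides through q^{i,j}; moreover every line of M that is a side of G_i but of no other G_k meets X_i in two points of Z_i and meets Z in exactly one point, and through every point of Z = S ∖ ⋃ X_i there passes exactly one side of G_i not shared with any other G_k. -/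
open Finset

/-- A partial Steiner triple system: a finite incidence structure given by its
set of lines (3-element subsets of the point set) such that two distinct
points lie on at most one common line. -/
structure PSTS (S : Type) where
  lines : Finset (Finset S)
  card3 : ∀ L ∈ lines, L.card = 3
  unique : ∀ L₁ ∈ lines, ∀ L₂ ∈ lines, ∀ a b : S, a ≠ b →
    a ∈ L₁ → b ∈ L₁ → a ∈ L₂ → b ∈ L₂ → L₁ = L₂

/-- The rank of a point: the number of lines through it. -/
def pointRank {S : Type} [DecidableEq S] (M : PSTS S) (p : S) : ℕ :=
  (M.lines.filter (fun L => p ∈ L)).card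

/-- A binomial B(m)-configuration: C(m,2) points, each of rank m-2, and C(m,3) lines. -/
def IsBinomial {S : Type} [Fintype S] [DecidableEq S] (M : PSTS S) (m : ℕ) : Prop :=
  Fintype.card S = Nat.choose m 2 ∧ M.lines.card = Nat.choose m 3 ∧
    ∀ p : S, pointRank M p = m - 2

/-- `L` is a side of the complete graph on `X`: a line of `M` meeting `X` in
exactly two points (the extension of an edge of `K_X`). -/
def IsSide {S : Type} [DecidableEq S] (M : PSTS S) (X L : Finset S) : Prop :=
  L ∈ M.lines ∧ (L ∩ X).card = 2

instance {S : Type} [DecidableEq S] (M : PSTS S) (X L : Finset S) :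
    Decidable (IsSide M X L) := by
  unfold IsSide; infer_instance

/-- The complete graph on the vertex set `X` is freely contained in `M`:
every edge of `K_X` extends to a (necessarily unique) line of `M` which meets
`X` in exactly two points (hence distinct edges extend to distinct lines), and
two distinct sides never meet outside `X`. -/
def FreelyContains {S : Type} [DecidableEq S] (M : PSTS S) (X : Finset S) : Prop :=
  (∀ a ∈ X, ∀ b ∈ X, a ≠ b → ∃ L ∈ M.lines, a ∈ L ∧ b ∈ L ∧ (L ∩ X).card = 2) ∧
  (∀ L₁ L₂ : Finset S, IsSide M X L₁ → IsSide M X L₂ → L₁ ≠ L₂ →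
    ∀ p, p ∈ L₁ → p ∈ L₂ → p ∈ X)

/-- `(Z,G)` is a B(m)-configuration regularly contained in `M` (a subspace):
the lines of `G` are lines of `M` lying in `Z`, every line of `M` meeting `Z`
in at least two points belongs to `G`, and `(Z,G)` has the binomial B(m) parameters. -/
def RegularBinomialSub {S : Type} [DecidableEq S] (M : PSTS S)
    (Z : Finset S) (G : Finset (Finset S)) (m : ℕ) : Prop :=
  G ⊆ M.lines ∧ (∀ L ∈ G, L ⊆ Z) ∧
  (∀ L ∈ M.lines, 2 ≤ (L ∩ Z).card → L ∈ G) ∧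
  Z.card = Nat.choose m 2 ∧ G.card = Nat.choose m 3 ∧
  ∀ p ∈ Z, (G.filter (fun L => p ∈ L)).card = m - 2

/-- The lines of the combinatorial Grassmannian G(Y,2): triples of 2-subsets
of `Y` contained in a common 3-subset. -/
def GrasLines (Y : Type) [Fintype Y] [DecidableEq Y] :
    Finset (Finset {e : Finset Y // e.card = 2}) :=
  (Finset.univ.filter (fun f : Finset Y => f.card = 3)).image
    (fun f => Finset.univ.filter (fun e : {e : Finset Y // e.card = 2} => e.val ⊆ f))

/-- `M` freely contains exactly `m` complete `K_j`-graphs. -/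
def ExactlyKGraphs {S : Type} [DecidableEq S] (M : PSTS S) (j m : ℕ) : Prop :=
  ∃ f : Fin m → Finset S, Function.Injective f ∧
    (∀ i, (f i).card = j ∧ FreelyContains M (f i)) ∧
    (∀ X : Finset S, X.card = j → FreelyContains M X → ∃ i, X = f i)

/-!
Every point of a B(n+1)-configuration has rank n-1, and a vertex `p` of a freely contained
`K_n` already lies on n-1 distinct sides; hence every line through a vertex of `G_i` is a side
of `G_i`. A line through a vertex common to three of the graphs would then carry two further
vertices of each of them, which a three-point line cannot do; so the vertices `q^{i,k}`, `k ≠ i`,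
are m-1 distinct vertices of `G_i` and `|Z_i| = n-m+1`. Subsets of freely contained vertex sets
are freely contained. A line through `q^{i,j}` is `{q^{i,j}, a, b}` with `a ∈ X_i`, `b ∈ X_j`,
and when `a ∈ Z_i` the point `b` cannot lie on a third `X_k`.
Finally, the `C(n,2)` sides of `G_i` each have one point off `X_i`, distinct sides have distinct
such points, and there are `C(n+1,2) - n = C(n,2)` points off `X_i`: each of them lies on exactly
one side of `G_i`, which is a side of no other `G_k` because `X_i ∩ X_k` is a single point.
-/

variable {S : Type} [DecidableEq S]

theorem PSTS.eq_or_eq_or_eq_of_mem (M : PSTS S) {L : Finset S} (hL : L ∈ M.lines)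
    {x y z u : S} (hx : x ∈ L) (hy : y ∈ L) (hz : z ∈ L) (hxy : x ≠ y) (hxz : x ≠ z)
    (hyz : y ≠ z) (hu : u ∈ L) : u = x ∨ u = y ∨ u = z := by
  have hL_eq : {x, y, z} = L := eq_of_subset_of_card_le (by simp [insert_subset_iff, *])
    (by rw [M.card3 L hL, card_insert_of_notMem (by simp [hxy, hxz]), card_pair hyz])
  simpa [← hL_eq] using hu

theorem IsSide.exists_mem_ne {M : PSTS S} {X L : Finset S} (hL : IsSide M X L) (a : S) :
    ∃ b ∈ L ∩ X, b ≠ a :=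
  Finset.exists_mem_ne (by rw [hL.2]; exact one_lt_two) a

theorem IsSide.inter_eq_of_notMem {M : PSTS S} {A B L : Finset S} (hA : IsSide M A L)
    (hB : IsSide M B L) {p : S} (hpL : p ∈ L) (hpA : p ∉ A) (hpB : p ∉ B) : L ∩ A = L ∩ B := by
  have h : ∀ {C}, IsSide M C L → p ∉ C → L ∩ C = L.erase p := fun hC hpC =>
    eq_of_subset_of_card_le
      (fun x hx => mem_erase.mpr ⟨fun h => hpC (h ▸ (mem_inter.mp hx).2), (mem_inter.mp hx).1⟩)
      (by rw [card_erase_of_mem hpL, M.card3 L hA.1, hC.2])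
  rw [h hA hpA, h hB hpB]

namespace FreelyContains

variable {M : PSTS S} {X : Finset S}

theorem card_inter_le_two (hX : FreelyContains M X) {L : Finset S} (hL : L ∈ M.lines) :
    (L ∩ X).card ≤ 2 := by
  by_contra! h
  obtain ⟨a, ha, b, hb, hab⟩ := one_lt_card.mp (by omega : 1 < (L ∩ X).card)
  rw [mem_inter] at ha hb
  obtain ⟨L', hL', haL', hbL', hcard⟩ := hX.1 a ha.2 b hb.2 hab
  rw [M.unique L hL L' hL' a b hab ha.1 hb.1 haL' hbL'] at h
  omega

theorem isSide_of_mem_of_mem (hX : FreelyContains M X) {L : Finset S} (hL : L ∈ M.lines)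
    {a b : S} (hab : a ≠ b) (ha : a ∈ L ∩ X) (hb : b ∈ L ∩ X) : IsSide M X L :=
  ⟨hL, le_antisymm (hX.card_inter_le_two hL) (one_lt_card.mpr ⟨a, ha, b, hb, hab⟩)⟩

theorem mono {Y : Finset S} (hX : FreelyContains M X) (hYX : Y ⊆ X) : FreelyContains M Y := by
  have hsub : ∀ L, L ∩ Y ⊆ L ∩ X := fun L => inter_subset_inter_left hYX
  have heq : ∀ {L}, IsSide M Y L → L ∩ Y = L ∩ X := fun hL =>
    eq_of_subset_of_card_le (hsub _) (hL.2 ▸ hX.card_inter_le_two hL.1)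
  refine ⟨fun a ha b hb hab => ?_, fun L₁ L₂ h₁ h₂ hne p hp₁ hp₂ => ?_⟩
  · obtain ⟨L, hL, haL, hbL, -⟩ := hX.1 a (hYX ha) b (hYX hb) hab
    refine ⟨L, hL, haL, hbL, le_antisymm ?_ ?_⟩
    · exact (card_le_card (hsub L)).trans (hX.card_inter_le_two hL)
    · exact one_lt_card.mpr ⟨a, mem_inter.mpr ⟨haL, ha⟩, b, mem_inter.mpr ⟨hbL, hb⟩, hab⟩
  · have hpX := hX.2 L₁ L₂ ⟨h₁.1, heq h₁ ▸ h₁.2⟩ ⟨h₂.1, heq h₂ ▸ h₂.2⟩ hne p hp₁ hp₂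
    have hp : p ∈ L₁ ∩ Y := (heq h₁).symm ▸ mem_inter.mpr ⟨hp₁, hpX⟩
    exact (mem_inter.mp hp).2

theorem isSide_of_mem (hX : FreelyContains M X) {p : S} (hp : p ∈ X)
    (hrank : pointRank M p = X.card - 1) {L : Finset S} (hL : L ∈ M.lines) (hpL : p ∈ L) :
    IsSide M X L := by
  obtain ⟨a, haX, hap, haL⟩ : ∃ a ∈ X, a ≠ p ∧ a ∈ L := by
    by_contra! hnone
    set linesThrough := M.lines.filter (p ∈ ·)
    -- the other vertices of `X` join `p` by distinct lines, none of them `L`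
    have hle : (X.erase p).card ≤ (linesThrough.erase L).card := by
      refine card_le_card_of_forall_subsingleton (· ∈ ·) (fun a ha => ?_)
        (fun L' hL' a ha b hb => ?_)
      · obtain ⟨hap, haX⟩ := mem_erase.mp ha
        obtain ⟨L', hL', hpL', haL', -⟩ := hX.1 p hp a haX hap.symm
        exact ⟨L', mem_erase.mpr ⟨fun h => hnone a haX hap (h ▸ haL'),
          mem_filter.mpr ⟨hL', hpL'⟩⟩, haL'⟩
      · obtain ⟨hL', hpL'⟩ := mem_filter.mp (mem_of_mem_erase hL')
        by_contra hab
        refine (hX.card_inter_le_two hL').not_gt (two_lt_card.mpr ⟨p, ?_, a, ?_, b, ?_,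
          (ne_of_mem_erase ha.1).symm, (ne_of_mem_erase hb.1).symm, hab⟩)
        · exact mem_inter.mpr ⟨hpL', hp⟩
        · exact mem_inter.mpr ⟨ha.2, mem_of_mem_erase ha.1⟩
        · exact mem_inter.mpr ⟨hb.2, mem_of_mem_erase hb.1⟩
    have hLp : L ∈ linesThrough := mem_filter.mpr ⟨hL, hpL⟩
    have hcard : linesThrough.card = X.card - 1 := hrank
    have hpos : 0 < linesThrough.card := card_pos.mpr ⟨L, hLp⟩
    rw [card_erase_of_mem hp, card_erase_of_mem hLp] at hle
    omega
  exact hX.isSide_of_mem_of_mem hL hap.symm (mem_inter.mpr ⟨hpL, hp⟩) (mem_inter.mpr ⟨haL, haX⟩)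

theorem card_sides (hX : FreelyContains M X) :
    (M.lines.filter (IsSide M X)).card = X.card.choose 2 := by
  rw [← card_powersetCard]
  refine card_bij (fun L _ => L ∩ X)
    (fun L hL => mem_powersetCard.mpr ⟨inter_subset_right, (mem_filter.mp hL).2.2⟩) ?_ ?_
  · intro L₁ h₁ L₂ h₂ heq
    obtain ⟨a, ha, b, hb, hab⟩ :=
      one_lt_card.mp (by rw [(mem_filter.mp h₁).2.2]; exact one_lt_two : 1 < (L₁ ∩ X).card)
    have ha₂ : a ∈ L₂ ∩ X := heq ▸ ha
    have hb₂ : b ∈ L₂ ∩ X := heq ▸ hb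
    exact M.unique L₁ (mem_filter.mp h₁).1 L₂ (mem_filter.mp h₂).1 a b hab
      (mem_inter.mp ha).1 (mem_inter.mp hb).1 (mem_inter.mp ha₂).1 (mem_inter.mp hb₂).1
  · intro e he
    obtain ⟨heX, he2⟩ := mem_powersetCard.mp he
    obtain ⟨a, b, hab, rfl⟩ := card_eq_two.mp he2
    have ha : a ∈ X := heX (mem_insert_self a {b})
    have hb : b ∈ X := heX (mem_insert_of_mem (mem_singleton_self b))
    obtain ⟨L, hL, haL, hbL, hcard⟩ := hX.1 a ha b hb hab
    refine ⟨L, mem_filter.mpr ⟨hL, hL, hcard⟩, (eq_of_subset_of_card_le ?_ ?_).symm⟩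
    · exact insert_subset (mem_inter.mpr ⟨haL, ha⟩)
        (singleton_subset_iff.mpr (mem_inter.mpr ⟨hbL, hb⟩))
    · rw [hcard, card_pair hab]

theorem existsUnique_isSide_of_notMem [Fintype S] (hX : FreelyContains M X)
    (hS : Fintype.card S = (X.card + 1).choose 2) {p : S} (hp : p ∉ X) :
    ∃! L, IsSide M X L ∧ p ∈ L := by
  refine existsUnique_of_exists_of_unique ?_ fun L₁ L₂ ⟨h₁, hp₁⟩ ⟨h₂, hp₂⟩ =>
    by_contra fun hne => hp (hX.2 L₁ L₂ h₁ h₂ hne p hp₁ hp₂)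
  by_contra! hnone
  -- each side has a point off `X`, never `p`, and distinct sides have distinct such points
  have hle : (M.lines.filter (IsSide M X)).card ≤ ((univ \ X).erase p).card := by
    refine card_le_card_of_forall_subsingleton (fun L c => c ∈ L) (fun L hL => ?_)
      (fun c hc L₁ h₁ L₂ h₂ => ?_)
    · have hside := (mem_filter.mp hL).2
      have hout : 0 < (L \ X).card := by
        have := card_inter_add_card_sdiff L X
        have := M.card3 L hside.1
        have := hside.2
        omega
      obtain ⟨c, hc⟩ := card_pos.mp hout
      obtain ⟨hcL, hcX⟩ := mem_sdiff.mp hc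
      exact ⟨c, mem_erase.mpr ⟨fun h => hnone L hside (h ▸ hcL),
        mem_sdiff.mpr ⟨mem_univ c, hcX⟩⟩, hcL⟩
    · by_contra hne
      exact (mem_sdiff.mp (mem_of_mem_erase hc)).2
        (hX.2 L₁ L₂ (mem_filter.mp h₁.1).2 (mem_filter.mp h₂.1).2 hne c h₁.2 h₂.2)
  have hpascal : (X.card + 1).choose 2 = X.card + X.card.choose 2 := by
    rw [Nat.choose_succ_succ, Nat.choose_one_right]
  have hcompl := card_erase_add_one (mem_sdiff.mpr ⟨mem_univ p, hp⟩ : p ∈ univ \ X)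
  rw [card_sdiff_of_subset (subset_univ X), card_univ, hS, hpascal] at hcompl
  rw [hX.card_sides] at hle
  omega

end FreelyContains

/-- The set `Z_i` of the paper. -/
def privatePoints {ι : Type*} [Fintype ι] [DecidableEq ι] (X : ι → Finset S) (i : ι) :
    Finset S :=
  (X i).filter fun p => ∀ k, k ≠ i → p ∉ X k

/-- The set `Z` of the paper. -/
def uncoveredPoints [Fintype S] {ι : Type*} [Fintype ι] (X : ι → Finset S) : Finset S :=
  univ.filter fun p => ∀ i, p ∉ X i

section Points

variable {ι : Type*} [Fintype ι] {X : ι → Finset S}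

theorem mem_privatePoints [DecidableEq ι] {i : ι} {p : S} :
    p ∈ privatePoints X i ↔ p ∈ X i ∧ ∀ k, k ≠ i → p ∉ X k :=
  mem_filter

theorem privatePoints_subset [DecidableEq ι] (i : ι) : privatePoints X i ⊆ X i :=
  filter_subset _ _

theorem mem_uncoveredPoints [Fintype S] {p : S} : p ∈ uncoveredPoints X ↔ ∀ i, p ∉ X i := by
  simp [uncoveredPoints]

end Points

/-- The vertex sets `X i` of pairwise distinct `K_n`-graphs freely contained in a
B(n+1)-configuration, any two of them meeting exactly in the vertex `q i j`. -/
structure FreeCliqueFamily [Fintype S] {ι : Type*} (M : PSTS S) (n : ℕ) (X : ι → Finset S)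
    (q : ι → ι → S) : Prop where
  binomial : IsBinomial M (n + 1)
  injective : Function.Injective X
  card_eq : ∀ i, (X i).card = n
  free : ∀ i, FreelyContains M (X i)
  inter_eq : ∀ i j, i ≠ j → X i ∩ X j = {q i j}

namespace FreeCliqueFamily

variable [Fintype S] {ι : Type*} {M : PSTS S} {n : ℕ} {X : ι → Finset S} {q : ι → ι → S}

theorem isSide_of_mem (h : FreeCliqueFamily M n X q) {i : ι} {p : S} {L : Finset S}
    (hp : p ∈ X i) (hL : L ∈ M.lines) (hpL : p ∈ L) : IsSide M (X i) L :=
  (h.free i).isSide_of_mem hp (by rw [h.card_eq i, h.binomial.2.2 p]; omega) hL hpL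

theorem notMem_of_not_isSide (h : FreeCliqueFamily M n X q) {k : ι} {p : S} {L : Finset S}
    (hL : L ∈ M.lines) (hpL : p ∈ L) (hk : ¬IsSide M (X k) L) : p ∉ X k :=
  fun hp => hk (h.isSide_of_mem hp hL hpL)

theorem eq_of_mem_of_mem (h : FreeCliqueFamily M n X q) {i j : ι} {p : S} (hij : i ≠ j)
    (hi : p ∈ X i) (hj : p ∈ X j) : p = q i j :=
  mem_singleton.mp (h.inter_eq i j hij ▸ mem_inter.mpr ⟨hi, hj⟩)

theorem q_mem (h : FreeCliqueFamily M n X q) {i j : ι} (hij : i ≠ j) :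
    q i j ∈ X i ∧ q i j ∈ X j :=
  mem_inter.mp (h.inter_eq i j hij ▸ mem_singleton_self _)

theorem q_comm (h : FreeCliqueFamily M n X q) {i j : ι} (hij : i ≠ j) : q i j = q j i :=
  h.eq_of_mem_of_mem hij.symm (h.q_mem hij).2 (h.q_mem hij).1

theorem notMem_of_mem_of_mem (h : FreeCliqueFamily M n X q) {i j k : ι} {p : S}
    (hij : i ≠ j) (hik : i ≠ k) (hjk : j ≠ k) (hi : p ∈ X i) (hj : p ∈ X j) : p ∉ X k := by
  intro hk
  have hpq := h.eq_of_mem_of_mem hij hi hj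
  rcases le_or_gt n 1 with hn | hn
  · have hsingle : ∀ {l}, p ∈ X l → X l = {p} := fun hl => eq_singleton_iff_unique_mem.mpr
      ⟨hl, fun x hx => card_le_one.mp (h.card_eq _ ▸ hn) x hx p hl⟩
    exact hij (h.injective ((hsingle hi).trans (hsingle hj).symm))
  obtain ⟨L, hL⟩ := card_pos.mp (show 0 < pointRank M p by rw [h.binomial.2.2 p]; omega)
  obtain ⟨hL, hpL⟩ := mem_filter.mp hL
  obtain ⟨a, ha, hap⟩ := (h.isSide_of_mem hi hL hpL).exists_mem_ne p
  obtain ⟨b, hb, hbp⟩ := (h.isSide_of_mem hj hL hpL).exists_mem_ne p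
  obtain ⟨c, hc, hcp⟩ := (h.isSide_of_mem hk hL hpL).exists_mem_ne p
  rw [mem_inter] at ha hb hc
  have hab : a ≠ b := fun e => hap ((h.eq_of_mem_of_mem hij ha.2 (e ▸ hb.2)).trans hpq.symm)
  have hac : a ≠ c := fun e =>
    hap ((h.eq_of_mem_of_mem hik ha.2 (e ▸ hc.2)).trans (h.eq_of_mem_of_mem hik hi hk).symm)
  have hbc : b ≠ c := fun e =>
    hbp ((h.eq_of_mem_of_mem hjk hb.2 (e ▸ hc.2)).trans (h.eq_of_mem_of_mem hjk hj hk).symm)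
  rcases M.eq_or_eq_or_eq_of_mem hL ha.1 hb.1 hc.1 hab hac hbc hpL with rfl | rfl | rfl
  exacts [hap rfl, hbp rfl, hcp rfl]

section Private

variable [Fintype ι] [DecidableEq ι]

theorem privatePoints_eq_sdiff (h : FreeCliqueFamily M n X q) (i : ι) :
    privatePoints X i = X i \ (univ.erase i).image (q i) := by
  ext p
  simp only [mem_privatePoints, mem_sdiff, mem_image, mem_erase, mem_univ, and_true, not_exists,
    not_and]
  exact and_congr_right fun hp =>
    ⟨fun hk k hki hpk => hk k hki (hpk ▸ (h.q_mem hki.symm).2),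
      fun hk k hki hpk => hk k hki (h.eq_of_mem_of_mem hki.symm hp hpk).symm⟩

theorem card_privatePoints_add (h : FreeCliqueFamily M n X q) (i : ι) :
    (privatePoints X i).card + (Fintype.card ι - 1) = n := by
  have hinj : Set.InjOn (q i) (univ.erase i : Finset ι) := fun k hk l hl hkl => by
    by_contra hkl'
    have hki := (mem_erase.mp hk).1
    have hli := (mem_erase.mp hl).1
    exact h.notMem_of_mem_of_mem hki.symm hli.symm hkl' (h.q_mem hki.symm).1 (h.q_mem hki.symm).2
      (hkl ▸ (h.q_mem hli.symm).2)
  have hsub : (univ.erase i).image (q i) ⊆ X i :=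
    image_subset_iff.mpr fun k hk => (h.q_mem (mem_erase.mp hk).1.symm).1
  have hle := card_le_card hsub
  rw [card_image_of_injOn hinj, card_erase_of_mem (mem_univ i), card_univ, h.card_eq] at hle
  rw [h.privatePoints_eq_sdiff, card_sdiff_of_subset hsub, card_image_of_injOn hinj,
    card_erase_of_mem (mem_univ i), card_univ, h.card_eq]
  omega

theorem card_privatePoints_union (h : FreeCliqueFamily M n X q) {i j : ι} (hij : i ≠ j) :
    (privatePoints X i ∪ {q i j}).card = n + 2 - Fintype.card ι := by
  have hq : q i j ∉ privatePoints X i := fun hq =>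
    (mem_privatePoints.mp hq).2 j hij.symm (h.q_mem hij).2
  have hι : 0 < Fintype.card ι := Fintype.card_pos_iff.mpr ⟨i⟩
  have := h.card_privatePoints_add i
  rw [card_union_of_disjoint (disjoint_singleton_right.mpr hq), card_singleton]
  omega

theorem freelyContains_privatePoints_union (h : FreeCliqueFamily M n X q) {i : ι} {p : S}
    (hp : p ∈ X i) : FreelyContains M (privatePoints X i ∪ {p}) :=
  (h.free i).mono (union_subset (privatePoints_subset i) (singleton_subset_iff.mpr hp))

theorem isSide_privatePoints_union (h : FreeCliqueFamily M n X q) {i j : ι} (hij : i ≠ j)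
    {L : Finset S} (hL : IsSide M (privatePoints X i ∪ {q i j}) L) (hqL : q i j ∈ L) :
    IsSide M (privatePoints X j ∪ {q i j}) L := by
  obtain ⟨z, hz, hzq⟩ := hL.exists_mem_ne (q i j)
  obtain ⟨hzL, hz⟩ := mem_inter.mp hz
  have hzP : z ∈ privatePoints X i := (mem_union.mp hz).resolve_right (by simpa using hzq)
  obtain ⟨w, hw, hwq⟩ := (h.isSide_of_mem (h.q_mem hij).2 hL.1 hqL).exists_mem_ne (q i j)
  obtain ⟨hwL, hwX⟩ := mem_inter.mp hw
  have hzw : z ≠ w := fun e => (mem_privatePoints.mp hzP).2 j hij.symm (e ▸ hwX)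
  have hwP : w ∈ privatePoints X j := by
    refine mem_privatePoints.mpr ⟨hwX, fun k hkj hwk => ?_⟩
    have hki : k ≠ i := by rintro rfl; exact hwq (h.eq_of_mem_of_mem hkj hwk hwX)
    -- `L = {q i j, z, w}`, and neither `q i j` nor `z` can be the second point of `L` on `X k`
    obtain ⟨u, hu, huw⟩ := (h.isSide_of_mem hwk hL.1 hwL).exists_mem_ne w
    obtain ⟨huL, huX⟩ := mem_inter.mp hu
    rcases M.eq_or_eq_or_eq_of_mem hL.1 hqL hzL hwL hzq.symm hwq.symm hzw huL with rfl | rfl | rfl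
    · exact h.notMem_of_mem_of_mem hij hki.symm hkj.symm (h.q_mem hij).1 (h.q_mem hij).2 huX
    · exact (mem_privatePoints.mp hzP).2 k hki huX
    · exact huw rfl
  exact (h.freelyContains_privatePoints_union (h.q_mem hij).2).isSide_of_mem_of_mem hL.1 hwq.symm
    (mem_inter.mpr ⟨hqL, mem_union_right _ (mem_singleton_self _)⟩)
    (mem_inter.mpr ⟨hwL, mem_union_left _ hwP⟩)

theorem isSide_privatePoints_union_iff (h : FreeCliqueFamily M n X q) {i j : ι} (hij : i ≠ j)
    {L : Finset S} (hqL : q i j ∈ L) :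
    IsSide M (privatePoints X i ∪ {q i j}) L ↔ IsSide M (privatePoints X j ∪ {q i j}) L := by
  refine ⟨fun hL => h.isSide_privatePoints_union hij hL hqL, fun hL => ?_⟩
  rw [h.q_comm hij] at hL hqL ⊢
  exact h.isSide_privatePoints_union hij.symm hL hqL

theorem inter_subset_privatePoints (h : FreeCliqueFamily M n X q) {i : ι} {L : Finset S}
    (hL : L ∈ M.lines) (hnot : ∀ k, k ≠ i → ¬IsSide M (X k) L) :
    L ∩ X i ⊆ privatePoints X i := fun _ hp =>
  mem_privatePoints.mpr
    ⟨(mem_inter.mp hp).2, fun k hk => h.notMem_of_not_isSide hL (mem_inter.mp hp).1 (hnot k hk)⟩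

end Private

theorem card_inter_uncoveredPoints (h : FreeCliqueFamily M n X q) {i : ι} {L : Finset S}
    [Fintype ι] (hL : IsSide M (X i) L) (hnot : ∀ k, k ≠ i → ¬IsSide M (X k) L) :
    (L ∩ uncoveredPoints X).card = 1 := by
  have heq : L ∩ uncoveredPoints X = L \ X i := by
    ext p
    simp only [mem_inter, mem_sdiff, mem_uncoveredPoints]
    refine ⟨fun hp => ⟨hp.1, hp.2 i⟩, fun hp => ⟨hp.1, fun k => ?_⟩⟩
    by_cases hk : k = i
    · exact hk ▸ hp.2
    · exact h.notMem_of_not_isSide hL.1 hp.1 (hnot k hk)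
  have := card_inter_add_card_sdiff L (X i)
  have := M.card3 L hL.1
  have := hL.2
  rw [heq]
  omega

theorem not_isSide_of_isSide (h : FreeCliqueFamily M n X q) [Fintype ι] {i k : ι}
    {L : Finset S} {p : S} (hik : i ≠ k) (hL : IsSide M (X i) L) (hpL : p ∈ L)
    (hp : p ∈ uncoveredPoints X) : ¬IsSide M (X k) L := fun hk => by
  have heq := hL.inter_eq_of_notMem hk hpL (mem_uncoveredPoints.mp hp i)
    (mem_uncoveredPoints.mp hp k)
  have hsub : L ∩ X i ⊆ X i ∩ X k := subset_inter inter_subset_right (heq ▸ inter_subset_right)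
  have := card_le_card hsub
  rw [hL.2, h.inter_eq i k hik, card_singleton] at this
  omega

theorem existsUnique_isSide (h : FreeCliqueFamily M n X q) [Fintype ι] (i : ι) {p : S}
    (hp : p ∈ uncoveredPoints X) :
    ∃! L, IsSide M (X i) L ∧ (∀ k, k ≠ i → ¬IsSide M (X k) L) ∧ p ∈ L := by
  obtain ⟨L, ⟨hL, hpL⟩, huniq⟩ := (h.free i).existsUnique_isSide_of_notMem
    (by rw [h.card_eq, h.binomial.1]) (mem_uncoveredPoints.mp hp i)
  exact ⟨L, ⟨hL, fun k hk => h.not_isSide_of_isSide (Ne.symm hk) hL hpL hp, hpL⟩,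
    fun L' hL' => huniq L' ⟨hL'.1, hL'.2.2⟩⟩

end FreeCliqueFamily

/-- with m distinct freely contained K_n-graphs: for i ≠ j the
sets Z_i ∪ {q^{i,j}} and Z_j ∪ {q^{i,j}} are freely contained K_{n-m+2}-graphs
sharing their sides through q^{i,j}; each side of G_i which is a side of no
other G_k meets X_i in two points of Z_i and meets Z in exactly one point; and
through each point of Z passes exactly one such side of G_i. -/
theorem stmt_14 (n m : ℕ) (S : Type) [Fintype S] [DecidableEq S] (M : PSTS S)
    (hM : IsBinomial M (n + 1)) (X : Fin m → Finset S)
    (hinj : Function.Injective X) (hcard : ∀ i, (X i).card = n)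
    (hfree : ∀ i, FreelyContains M (X i))
    (q : Fin m → Fin m → S)
    (hq : ∀ i j, i ≠ j → X i ∩ X j = {q i j})
    (Zi : Fin m → Finset S)
    (hZi : ∀ i, Zi i = (X i).filter (fun p => ∀ k, k ≠ i → p ∉ X k))
    (Z : Finset S) (hZ : Z = Finset.univ.filter (fun p => ∀ i, p ∉ X i)) :
    (∀ i j, i ≠ j →
      (Zi i ∪ {q i j}).card = n + 2 - m ∧ (Zi j ∪ {q i j}).card = n + 2 - m ∧
      FreelyContains M (Zi i ∪ {q i j}) ∧ FreelyContains M (Zi j ∪ {q i j}) ∧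
      (∀ L : Finset S, q i j ∈ L →
        (IsSide M (Zi i ∪ {q i j}) L ↔ IsSide M (Zi j ∪ {q i j}) L))) ∧
    (∀ i, ∀ L : Finset S, IsSide M (X i) L →
      (∀ k, k ≠ i → ¬ IsSide M (X k) L) →
      L ∩ X i ⊆ Zi i ∧ (L ∩ Zi i).card = 2 ∧ (L ∩ Z).card = 1) ∧
    (∀ i, ∀ p ∈ Z, ∃! L : Finset S,
      IsSide M (X i) L ∧ (∀ k, k ≠ i → ¬ IsSide M (X k) L) ∧ p ∈ L) := by
  obtain rfl : Zi = privatePoints X :=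
    funext fun i => by ext p; rw [hZi, mem_filter, mem_privatePoints]
  obtain rfl : Z = uncoveredPoints X := by ext p; simp [hZ, mem_uncoveredPoints]
  have h : FreeCliqueFamily M n X q := ⟨hM, hinj, hcard, hfree, hq⟩
  have hcardU : ∀ i j, i ≠ j → (privatePoints X i ∪ {q i j}).card = n + 2 - m :=
    fun i j hij => (h.card_privatePoints_union hij).trans (by rw [Fintype.card_fin])
  refine ⟨fun i j hij => ?_, fun i L hL hnot => ?_, fun i p hp => h.existsUnique_isSide i hp⟩
  · refine ⟨hcardU i j hij, h.q_comm hij ▸ hcardU j i hij.symm,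
      h.freelyContains_privatePoints_union (h.q_mem hij).1,
      h.freelyContains_privatePoints_union (h.q_mem hij).2,
      fun L => h.isSide_privatePoints_union_iff hij⟩
  · have hsub := h.inter_subset_privatePoints hL.1 hnot
    have heq : L ∩ privatePoints X i = L ∩ X i :=
      (inter_subset_inter_left (privatePoints_subset i)).antisymm
        (subset_inter inter_subset_left hsub)
    exact ⟨hsub, heq ▸ hL.2, h.card_inter_uncoveredPoints hL hnot⟩
end

section
/- Given a B(n)-configuration N = (Z,G) that does not freely contain any K_{n-1}-graph, an n-element set X disjoint from Z, and a bijection μ from the 2-subsets of X to Z, the structure K_X +_μ N — with point set X ∪ Z and lines G together with all triples {a, b, μ({a,b})} for 2-subsets {a,b} of X — is a B(n+1)-configuration that freely contains exactly one K_n-graph, namely K_X. -/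
open Finset

/-!
Each point of `X` lies on the `n - 1` sides through it, and each point `z` of `N` gains exactly
one line, the side labelled `z`; counting points, lines and ranks gives the B(n+1) parameters.
If a freely contained `K_n`-graph `Y` had a vertex `z` in `N`, every vertex of `Y` in `X` would
lie on the side labelled `z`, and not both of its `X`-points can be vertices (that side would
meet `Y` three times). So at least `n - 1` vertices of `Y` lie in `N`, and they span a
`K_{n-1}`-graph freely contained in `N`.
-/

section FreelyContains

variable {S : Type} [DecidableEq S] {M : PSTS S} {Y Y' : Finset S}

lemma FreelyContains.empty (M : PSTS S) : FreelyContains M ∅ :=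
  ⟨by simp, fun _ _ h₁ _ _ _ _ _ => by simpa [IsSide] using h₁.2⟩

lemma FreelyContains.card_inter_le_two_s15 (h : FreelyContains M Y) {L : Finset S}
    (hL : L ∈ M.lines) : #(L ∩ Y) ≤ 2 := by
  by_contra! hc
  obtain ⟨a, ha, b, hb, hab⟩ := one_lt_card.mp (by omega : 1 < #(L ∩ Y))
  rw [mem_inter] at ha hb
  obtain ⟨L', hL', haL', hbL', hcard⟩ := h.1 a ha.2 b hb.2 hab
  rw [M.unique L hL L' hL' a b hab ha.1 hb.1 haL' hbL'] at hc
  omega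

lemma FreelyContains.inter_eq_of_subset (h : FreelyContains M Y) (hY' : Y' ⊆ Y)
    {L : Finset S} (hL : L ∈ M.lines) (h2 : #(L ∩ Y') = 2) : L ∩ Y' = L ∩ Y :=
  eq_of_subset_of_card_le (inter_subset_inter_left hY') (h2 ▸ h.card_inter_le_two_s15 hL)

lemma FreelyContains.subset (h : FreelyContains M Y) (hY' : Y' ⊆ Y) :
    FreelyContains M Y' := by
  refine ⟨fun a ha b hb hab => ?_, fun L₁ L₂ h₁ h₂ hne p hp₁ hp₂ => ?_⟩
  · obtain ⟨L, hL, haL, hbL, -⟩ := h.1 a (hY' ha) b (hY' hb) hab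
    refine ⟨L, hL, haL, hbL, le_antisymm ?_ ?_⟩
    · exact (card_le_card (inter_subset_inter_left hY')).trans (h.card_inter_le_two_s15 hL)
    · rw [← card_pair hab]
      exact card_le_card (by simp [insert_subset_iff, *])
  · have side : ∀ {L}, IsSide M Y' L → IsSide M Y L ∧ L ∩ Y' = L ∩ Y := fun hL =>
      have heq := h.inter_eq_of_subset hY' hL.1 hL.2
      ⟨⟨hL.1, heq ▸ hL.2⟩, heq⟩
    have hp : p ∈ L₁ ∩ Y :=
      mem_inter.2 ⟨hp₁, h.2 L₁ L₂ (side h₁).1 (side h₂).1 hne p hp₁ hp₂⟩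
    rw [← (side h₁).2] at hp
    exact (mem_inter.1 hp).2

end FreelyContains

abbrev TwoSubset (X : Type) := {e : Finset X // #e = 2}

lemma TwoSubset.val_eq_pair {X : Type} [DecidableEq X] (e : TwoSubset X) {x y : X}
    (hxy : x ≠ y) (hx : x ∈ e.val) (hy : y ∈ e.val) : e.val = {x, y} :=
  (eq_of_subset_of_card_le (by simp [insert_subset_iff, hx, hy])
    (by rw [e.2, card_pair hxy])).symm

lemma TwoSubset.card_filter_mem {X : Type} [Fintype X] [DecidableEq X] (x : X) :
    #{e : TwoSubset X | x ∈ e.val} = Fintype.card X - 1 := by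
  rw [← card_univ, ← card_erase_of_mem (mem_univ x)]
  symm
  refine card_bij (fun y hy => ⟨{x, y}, card_pair (ne_of_mem_erase hy).symm⟩)
    (by simp) (fun y₁ h₁ y₂ h₂ h => ?_) (fun e he => ?_)
  · have hy : y₁ ∈ ({x, y₂} : Finset X) := by
      rw [← Subtype.mk.inj h]; exact mem_insert_of_mem (mem_singleton_self y₁)
    simpa [ne_of_mem_erase h₁] using hy
  · obtain ⟨y, hy, hxy⟩ := exists_mem_ne (e.2.symm ▸ one_lt_two) x
    refine ⟨y, mem_erase.2 ⟨hxy, mem_univ y⟩, Subtype.ext ?_⟩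
    rw [e.val_eq_pair hxy.symm (mem_filter.1 he).2 hy]

section Attach

variable {X Z : Type} [DecidableEq X] [DecidableEq Z] {μ : TwoSubset X → Z}

def edgeLine (μ : TwoSubset X → Z) (e : TwoSubset X) : Finset (X ⊕ Z) :=
  e.val.image Sum.inl ∪ {Sum.inr (μ e)}

@[simp]
lemma inl_mem_edgeLine {e : TwoSubset X} {x : X} : Sum.inl x ∈ edgeLine μ e ↔ x ∈ e.val := by
  simp [edgeLine]

@[simp]
lemma inr_mem_edgeLine {e : TwoSubset X} {z : Z} : Sum.inr z ∈ edgeLine μ e ↔ z = μ e := by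
  simp [edgeLine]

lemma card_edgeLine (e : TwoSubset X) : #(edgeLine μ e) = 3 := by
  rw [edgeLine, card_union_of_disjoint (by simp [disjoint_left]),
    card_image_of_injective _ Sum.inl_injective, e.2, card_singleton]

lemma edgeLine_injective : Function.Injective (edgeLine μ) := fun e₁ e₂ h =>
  Subtype.ext <| Finset.ext fun x => by rw [← inl_mem_edgeLine (μ := μ), h, inl_mem_edgeLine]

lemma eq_of_inr_mem_edgeLine {e : TwoSubset X} {a b : Z} (ha : Sum.inr a ∈ edgeLine μ e)
    (hb : Sum.inr b ∈ edgeLine μ e) : a = b :=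
  (inr_mem_edgeLine.1 ha).trans (inr_mem_edgeLine.1 hb).symm

lemma eq_of_mem_edgeLine (hμ : Function.Injective μ) {e₁ e₂ : TwoSubset X} {a b : X ⊕ Z}
    (hab : a ≠ b) (ha₁ : a ∈ edgeLine μ e₁) (hb₁ : b ∈ edgeLine μ e₁)
    (ha₂ : a ∈ edgeLine μ e₂) (hb₂ : b ∈ edgeLine μ e₂) : e₁ = e₂ := by
  rcases a with x | z
  · rcases b with y | z
    · have hxy : x ≠ y := fun h => hab (h ▸ rfl)
      simp only [inl_mem_edgeLine] at ha₁ hb₁ ha₂ hb₂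
      exact Subtype.ext ((e₁.val_eq_pair hxy ha₁ hb₁).trans (e₂.val_eq_pair hxy ha₂ hb₂).symm)
    · exact hμ ((inr_mem_edgeLine.1 hb₁).symm.trans (inr_mem_edgeLine.1 hb₂))
  · exact hμ ((inr_mem_edgeLine.1 ha₁).symm.trans (inr_mem_edgeLine.1 ha₂))

variable [Fintype X] {N : PSTS Z}

def attachLines (N : PSTS Z) (μ : TwoSubset X → Z) : Finset (Finset (X ⊕ Z)) :=
  N.lines.image (image Sum.inr) ∪ univ.image (edgeLine μ)

lemma mem_attachLines {L : Finset (X ⊕ Z)} :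
    L ∈ attachLines N μ ↔ (∃ L₀ ∈ N.lines, L₀.image Sum.inr = L) ∨ ∃ e, edgeLine μ e = L := by
  simp [attachLines]

lemma exists_edgeLine_of_inl_mem {L : Finset (X ⊕ Z)} (hL : L ∈ attachLines N μ) {x : X}
    (hx : Sum.inl x ∈ L) : ∃ e, edgeLine μ e = L ∧ x ∈ e.val := by
  rcases mem_attachLines.1 hL with ⟨L₀, -, rfl⟩ | ⟨e, rfl⟩
  · simp at hx
  · exact ⟨e, rfl, inl_mem_edgeLine.1 hx⟩

lemma exists_image_inr_of_inr_mem {L : Finset (X ⊕ Z)} (hL : L ∈ attachLines N μ) {a b : Z}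
    (hab : a ≠ b) (ha : Sum.inr a ∈ L) (hb : Sum.inr b ∈ L) :
    ∃ L₀ ∈ N.lines, L₀.image Sum.inr = L := by
  rcases mem_attachLines.1 hL with h | ⟨e, rfl⟩
  · exact h
  · exact absurd (eq_of_inr_mem_edgeLine ha hb) hab

lemma card_of_mem_attachLines {L : Finset (X ⊕ Z)} (hL : L ∈ attachLines N μ) : #L = 3 := by
  rcases mem_attachLines.1 hL with ⟨L₀, hL₀, rfl⟩ | ⟨e, rfl⟩
  · rw [card_image_of_injective _ Sum.inr_injective, N.card3 L₀ hL₀]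
  · exact card_edgeLine e

lemma eq_of_mem_attachLines (hμ : Function.Injective μ) {L₁ L₂ : Finset (X ⊕ Z)}
    (h₁ : L₁ ∈ attachLines N μ) (h₂ : L₂ ∈ attachLines N μ) {a b : X ⊕ Z} (hab : a ≠ b)
    (ha₁ : a ∈ L₁) (hb₁ : b ∈ L₁) (ha₂ : a ∈ L₂) (hb₂ : b ∈ L₂) : L₁ = L₂ := by
  rcases a with x | a
  · obtain ⟨e₁, rfl, -⟩ := exists_edgeLine_of_inl_mem h₁ ha₁
    obtain ⟨e₂, rfl, -⟩ := exists_edgeLine_of_inl_mem h₂ ha₂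
    rw [eq_of_mem_edgeLine hμ hab ha₁ hb₁ ha₂ hb₂]
  rcases b with y | b
  · obtain ⟨e₁, rfl, -⟩ := exists_edgeLine_of_inl_mem h₁ hb₁
    obtain ⟨e₂, rfl, -⟩ := exists_edgeLine_of_inl_mem h₂ hb₂
    rw [eq_of_mem_edgeLine hμ hab ha₁ hb₁ ha₂ hb₂]
  have hab : a ≠ b := fun h => hab (h ▸ rfl)
  obtain ⟨L₀, hL₀, rfl⟩ := exists_image_inr_of_inr_mem h₁ hab ha₁ hb₁
  obtain ⟨M₀, hM₀, rfl⟩ := exists_image_inr_of_inr_mem h₂ hab ha₂ hb₂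
  simp only [mem_image, Sum.inr.injEq, exists_eq_right] at ha₁ hb₁ ha₂ hb₂
  rw [N.unique L₀ hL₀ M₀ hM₀ a b hab ha₁ hb₁ ha₂ hb₂]


/-- The structure `K_X +_μ N`. -/
def PSTS.attach (N : PSTS Z) (μ : TwoSubset X → Z) (hμ : Function.Injective μ) :
    PSTS (X ⊕ Z) where
  lines := attachLines N μ
  card3 _ := card_of_mem_attachLines
  unique _ h₁ _ h₂ _ _ := eq_of_mem_attachLines hμ h₁ h₂

variable {hμ : Function.Injective μ}

lemma attach_lines : (N.attach μ hμ).lines = attachLines N μ := rfl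

lemma disjoint_attachLines :
    Disjoint (N.lines.image (image Sum.inr)) (univ.image (edgeLine (X := X) μ)) := by
  simp only [disjoint_left, mem_image, mem_univ, true_and, not_exists]
  rintro _ ⟨L₀, -, rfl⟩ e he
  obtain ⟨x, hx⟩ := card_pos.1 (by rw [e.2]; exact two_pos : 0 < #e.val)
  have hxe : Sum.inl x ∈ edgeLine μ e := inl_mem_edgeLine.2 hx
  simp [he] at hxe

lemma card_attach_lines :
    #(N.attach μ hμ).lines = #N.lines + (Fintype.card X).choose 2 := by
  rw [attach_lines, attachLines, card_union_of_disjoint disjoint_attachLines,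
    card_image_of_injective _ (image_injective Sum.inr_injective),
    card_image_of_injective _ edgeLine_injective, card_univ, Fintype.card_finset_len]

lemma pointRank_attach (p : X ⊕ Z) : pointRank (N.attach μ hμ) p =
    #{L ∈ N.lines | p ∈ L.image Sum.inr} + #{e | p ∈ edgeLine μ e} := by
  rw [pointRank, attach_lines, attachLines, filter_union,
    card_union_of_disjoint (disjoint_filter_filter disjoint_attachLines), filter_image,
    filter_image, card_image_of_injective _ (image_injective Sum.inr_injective),
    card_image_of_injective _ edgeLine_injective]

lemma pointRank_attach_inl (x : X) :
    pointRank (N.attach μ hμ) (Sum.inl x) = Fintype.card X - 1 := by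
  simp [pointRank_attach, TwoSubset.card_filter_mem]

lemma pointRank_attach_inr (z : Z) :
    pointRank (N.attach μ hμ) (Sum.inr z) = pointRank N z + #{e | z = μ e} := by
  rw [pointRank_attach]
  simp [pointRank]

lemma isBinomial_attach [Fintype Z] (hN : IsBinomial N (Fintype.card X))
    (hμ : Function.Bijective μ) (hX : 2 ≤ Fintype.card X) :
    IsBinomial (N.attach μ hμ.1) (Fintype.card X + 1) := by
  refine ⟨?_, ?_, ?_⟩
  · rw [Fintype.card_sum, hN.1, Nat.choose_succ_succ, Nat.choose_one_right]
  · rw [card_attach_lines, hN.2.1, Nat.choose_succ_succ, add_comm]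
  · rintro (x | z)
    · rw [pointRank_attach_inl]
      omega
    · obtain ⟨e, rfl⟩ := hμ.2 z
      have hlabel : ({e' | μ e = μ e'} : Finset (TwoSubset X)) = {e} := by
        ext e'
        simp [hμ.1.eq_iff, eq_comm]
      rw [pointRank_attach_inr, hlabel, card_singleton, hN.2.2]
      omega

lemma edgeLine_inter_range_inl (e : TwoSubset X) :
    edgeLine μ e ∩ univ.image Sum.inl = e.val.image Sum.inl := by
  ext (x | z) <;> simp

lemma freelyContains_attach_range_inl :
    FreelyContains (N.attach μ hμ) (univ.image Sum.inl) := by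
  refine ⟨?_, fun L₁ L₂ h₁ h₂ hne p hp₁ hp₂ => ?_⟩
  · simp only [mem_image, mem_univ, true_and]
    rintro _ ⟨x, rfl⟩ _ ⟨y, rfl⟩ hxy
    have hxy : x ≠ y := fun h => hxy (h ▸ rfl)
    refine ⟨edgeLine μ ⟨{x, y}, card_pair hxy⟩, mem_attachLines.2 (Or.inr ⟨_, rfl⟩),
      by simp, by simp, ?_⟩
    rw [edgeLine_inter_range_inl, card_image_of_injective _ Sum.inl_injective, card_pair hxy]
  · have side : ∀ {L}, IsSide (N.attach μ hμ) (univ.image Sum.inl) L → ∃ e, edgeLine μ e = L :=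
      fun {L} hL => by
        obtain ⟨p, hp⟩ := card_pos.1 (by rw [hL.2]; exact two_pos : 0 < #(L ∩ univ.image Sum.inl))
        obtain ⟨hpL, x, -, rfl⟩ := mem_inter.1 hp |>.imp_right mem_image.1
        obtain ⟨e, he, -⟩ := exists_edgeLine_of_inl_mem hL.1 hpL
        exact ⟨e, he⟩
    obtain ⟨e₁, rfl⟩ := side h₁
    obtain ⟨e₂, rfl⟩ := side h₂
    rcases p with x | z
    · exact mem_image_of_mem _ (mem_univ x)
    · exact absurd (congrArg (edgeLine μ) (hμ ((inr_mem_edgeLine.1 hp₁).symm.trans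
        (inr_mem_edgeLine.1 hp₂)))) hne

lemma freelyContains_of_attach {B : Finset Z}
    (h : FreelyContains (N.attach μ hμ) (B.image Sum.inr)) : FreelyContains N B := by
  have inter_image : ∀ L : Finset Z, L.image Sum.inr ∩ B.image Sum.inr =
      (L ∩ B).image (Sum.inr : Z → X ⊕ Z) :=
    fun L => (image_inter L B Sum.inr_injective).symm
  refine ⟨fun a ha b hb hab => ?_, fun L₁ L₂ h₁ h₂ hne p hp₁ hp₂ => ?_⟩
  · obtain ⟨L, hL, haL, hbL, hcard⟩ :=
      h.1 _ (mem_image_of_mem _ ha) _ (mem_image_of_mem _ hb) (by simpa using hab)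
    obtain ⟨L₀, hL₀, rfl⟩ := exists_image_inr_of_inr_mem hL hab haL hbL
    rw [inter_image, card_image_of_injective _ Sum.inr_injective] at hcard
    exact ⟨L₀, hL₀, by simpa using haL, by simpa using hbL, hcard⟩
  · have side : ∀ {L}, IsSide N B L →
        IsSide (N.attach μ hμ) (B.image Sum.inr) (L.image Sum.inr) := fun hL =>
      ⟨mem_attachLines.2 (Or.inl ⟨_, hL.1, rfl⟩),
        by rw [inter_image, card_image_of_injective _ Sum.inr_injective, hL.2]⟩
    have := h.2 _ _ (side h₁) (side h₂) (fun h => hne (image_injective Sum.inr_injective h))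
      (Sum.inr p) (mem_image_of_mem _ hp₁) (mem_image_of_mem _ hp₂)
    simpa using this

lemma card_toLeft_le_one_of_freelyContains_attach {Y : Finset (X ⊕ Z)}
    (hY : FreelyContains (N.attach μ hμ) Y) {e : TwoSubset X} (he : Sum.inr (μ e) ∈ Y) :
    #Y.toLeft ≤ 1 := by
  have hsub : Y.toLeft ⊆ e.val := fun x hx => by
    obtain ⟨L, hL, hxL, heL, -⟩ := hY.1 _ (mem_toLeft.1 hx) _ he (by simp)
    obtain ⟨e', rfl, hxe'⟩ := exists_edgeLine_of_inl_mem hL hxL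
    rwa [hμ (inr_mem_edgeLine.1 heL)]
  have hne : Y.toLeft ≠ e.val := fun heq => by
    have hline : edgeLine μ e ⊆ Y := by
      rintro (x | z) hp
      · rw [← mem_toLeft, heq]
        exact inl_mem_edgeLine.1 hp
      · rwa [inr_mem_edgeLine.1 hp]
    have := hY.card_inter_le_two_s15 (mem_attachLines.2 (Or.inr ⟨e, rfl⟩))
    rw [inter_eq_left.2 hline, card_edgeLine] at this
    omega
  have := card_lt_card (ssubset_of_subset_of_ne hsub hne)
  rw [e.2] at this
  omega

lemma eq_range_inl_of_freelyContains_attach (hμ : Function.Bijective μ)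
    (hnoK : ∀ B : Finset Z, #B = Fintype.card X - 1 → ¬ FreelyContains N B)
    {Y : Finset (X ⊕ Z)} (hcard : #Y = Fintype.card X)
    (hY : FreelyContains (N.attach μ hμ.1) Y) : Y = univ.image Sum.inl := by
  have not_inr : ∀ z, Sum.inr z ∉ Y := fun z hz => by
    obtain ⟨e, rfl⟩ := hμ.2 z
    have hleft := card_toLeft_le_one_of_freelyContains_attach hY hz
    have hsplit := card_toLeft_add_card_toRight (u := Y)
    obtain ⟨B, hB, hBcard⟩ := exists_subset_card_eq (show Fintype.card X - 1 ≤ #Y.toRight by omega)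
    have hright : FreelyContains (N.attach μ hμ.1) (Y.toRight.image Sum.inr) :=
      hY.subset (by simp [subset_iff])
    exact hnoK B hBcard ((freelyContains_of_attach hright).subset hB)
  refine eq_of_subset_of_card_le ?_ ?_
  · rintro (x | z) hp
    · simp
    · exact absurd hp (not_inr z)
  · rw [card_image_of_injective _ Sum.inl_injective, card_univ, hcard]

end Attach

/-- Given a B(n)-configuration N freely containing no
K_{n-1}-graph, an n-element set X disjoint from its points, and a labelling μ
(a bijection from the 2-subsets of X to the points of N), the structure
K_X +_μ N is a B(n+1)-configuration freely containing exactly one K_n-graph,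
namely K_X. -/
theorem stmt_15 (n : ℕ) (Xt Zt : Type) [Fintype Xt] [DecidableEq Xt]
    [Fintype Zt] [DecidableEq Zt] (hXt : Fintype.card Xt = n)
    (N : PSTS Zt) (hN : IsBinomial N n)
    (hnoK : ∀ Y : Finset Zt, Y.card = n - 1 → ¬ FreelyContains N Y)
    (μ : {e : Finset Xt // e.card = 2} → Zt) (hμ : Function.Bijective μ) :
    ∃ M : PSTS (Xt ⊕ Zt),
      M.lines = N.lines.image (fun L => L.image Sum.inr) ∪
        Finset.univ.image (fun e : {e : Finset Xt // e.card = 2} =>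
          e.val.image Sum.inl ∪ {Sum.inr (μ e)}) ∧
      IsBinomial M (n + 1) ∧
      FreelyContains M (Finset.univ.image Sum.inl) ∧
      (∀ X' : Finset (Xt ⊕ Zt), X'.card = n → FreelyContains M X' →
        X' = Finset.univ.image Sum.inl) := by
  subst hXt
  have hn : 2 ≤ Fintype.card Xt := by
    by_contra! hn
    exact hnoK ∅ (by rw [card_empty]; omega) (FreelyContains.empty N)
  exact ⟨N.attach μ hμ.1, rfl, isBinomial_attach hN hμ hn, freelyContains_attach_range_inl,
    fun _ hcard hfree => eq_range_inl_of_freelyContains_attach hμ hnoK hcard hfree⟩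
end

section
/- If there exists a B(n)-configuration freely containing exactly m K_{n-1}-graphs with m ≤ n-2, then there exists a B(n+1)-configuration freely containing exactly m+1 K_n-graphs. -/
open Finset

section GeneralLemmas

variable {S : Type} [DecidableEq S] (M : PSTS S)

/-- In a free `K_Z`, if the rank of a vertex `z` equals `|Z| - 1`, then every
line through `z` is a side of `Z`. -/
lemma side_all {Z : Finset S} (hZ : FreelyContains M Z) {z : S} (hz : z ∈ Z)
    (hrank : pointRank M z + 1 = Z.card) :
    ∀ L ∈ M.lines, z ∈ L → (L ∩ Z).card = 2 := by
  classical
  have key : ∀ a : S, ∃ L : Finset S, a ∈ Z.erase z →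
      L ∈ M.lines ∧ z ∈ L ∧ a ∈ L ∧ (L ∩ Z).card = 2 := by
    intro a
    by_cases ha : a ∈ Z.erase z
    · obtain ⟨hne, haZ⟩ := Finset.mem_erase.mp ha
      obtain ⟨L, hL, h1, h2, h3⟩ := hZ.1 z hz a haZ (Ne.symm hne)
      exact ⟨L, fun _ => ⟨hL, h1, h2, h3⟩⟩
    · exact ⟨∅, fun h => absurd h ha⟩
  choose g hg using key
  set T := M.lines.filter (fun L => z ∈ L) with hTdef
  set T2 := T.filter (fun L => (L ∩ Z).card = 2) with hT2def
  have hsub : T2 ⊆ T := Finset.filter_subset _ _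
  have hmaps : ∀ a ∈ Z.erase z, g a ∈ T2 := by
    intro a ha
    obtain ⟨h1, h2, h3, h4⟩ := hg a ha
    simp only [hT2def, hTdef, Finset.mem_filter]
    exact ⟨⟨h1, h2⟩, h4⟩
  have hinj : Set.InjOn g ↑(Z.erase z) := by
    intro a ha b hb hab
    by_contra hne
    rw [Finset.mem_coe] at ha hb
    obtain ⟨h1a, h2a, h3a, h4a⟩ := hg a ha
    obtain ⟨h1b, h2b, h3b, h4b⟩ := hg b hb
    obtain ⟨hza, haZ⟩ := Finset.mem_erase.mp ha
    obtain ⟨hzb, hbZ⟩ := Finset.mem_erase.mp hb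
    have hsub3 : ({z, a, b} : Finset S) ⊆ g a ∩ Z := by
      intro x hx
      simp only [Finset.mem_insert, Finset.mem_singleton] at hx
      rcases hx with rfl | rfl | rfl
      · exact Finset.mem_inter.mpr ⟨h2a, hz⟩
      · exact Finset.mem_inter.mpr ⟨h3a, haZ⟩
      · exact Finset.mem_inter.mpr ⟨hab ▸ h3b, hbZ⟩
    have hc3 : ({z, a, b} : Finset S).card = 3 := by
      rw [Finset.card_insert_of_notMem (by simp [Ne.symm hza, Ne.symm hzb]),
        Finset.card_insert_of_notMem (by simpa using hne), Finset.card_singleton]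
    have := Finset.card_le_card hsub3
    rw [hc3, h4a] at this
    omega
  have hcard : T.card ≤ T2.card := by
    have h1 : (Z.erase z).card ≤ T2.card :=
      Finset.card_le_card_of_injOn g hmaps hinj
    rw [Finset.card_erase_of_mem hz] at h1
    have h2 : T.card = pointRank M z := rfl
    omega
  have hTT : T2 = T := Finset.eq_of_subset_of_card_le hsub hcard
  intro L hL hzL
  have hLT : L ∈ T := Finset.mem_filter.mpr ⟨hL, hzL⟩
  rw [← hTT] at hLT
  exact (Finset.mem_filter.mp hLT).2

/-- Every point outside a free `K_Y` (with the right parameters) lies on a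
side of `Y`. -/
lemma exists_side [Fintype S] {Y : Finset S} (hY : FreelyContains M Y)
    (hcard : Fintype.card S = Nat.choose Y.card 2 + Y.card) :
    ∀ z : S, z ∉ Y → ∃ L ∈ M.lines, z ∈ L ∧ (L ∩ Y).card = 2 := by
  classical
  set Sides := M.lines.filter (fun L => (L ∩ Y).card = 2) with hSdef
  -- lower bound : injection from pairs of Y
  have key : ∀ e : Finset S, ∃ L : Finset S, e ∈ Y.powersetCard 2 →
      L ∈ Sides ∧ e ⊆ L ∧ e ⊆ Y := by
    intro e
    by_cases he : e ∈ Y.powersetCard 2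
    · obtain ⟨heY, hec⟩ := Finset.mem_powersetCard.mp he
      obtain ⟨a, b, hab, rfl⟩ := Finset.card_eq_two.mp hec
      have haY : a ∈ Y := heY (by simp)
      have hbY : b ∈ Y := heY (by simp)
      obtain ⟨L, hL, h1, h2, h3⟩ := hY.1 a haY b hbY hab
      refine ⟨L, fun _ => ⟨Finset.mem_filter.mpr ⟨hL, h3⟩, ?_, heY⟩⟩
      intro x hx
      simp only [Finset.mem_insert, Finset.mem_singleton] at hx
      rcases hx with rfl | rfl
      · exact h1
      · exact h2
    · exact ⟨∅, fun h => absurd h he⟩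
  choose g hg using key
  have hglow : (Y.powersetCard 2).card ≤ Sides.card := by
    apply Finset.card_le_card_of_injOn g (fun e he => (hg e he).1)
    intro e he e' he' hee
    rw [Finset.mem_coe] at he he'
    obtain ⟨hg1, hg2, hg3⟩ := hg e he
    obtain ⟨hg1', hg2', hg3'⟩ := hg e' he'
    have hc : (g e ∩ Y).card = 2 := (Finset.mem_filter.mp hg1).2
    have he2 : e.card = 2 := (Finset.mem_powersetCard.mp he).2
    have he2' : e'.card = 2 := (Finset.mem_powersetCard.mp he').2
    have h1 : e = g e ∩ Y := by
      apply Finset.eq_of_subset_of_card_le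
      · exact fun x hx => Finset.mem_inter.mpr ⟨hg2 hx, hg3 hx⟩
      · omega
    have h2 : e' = g e' ∩ Y := by
      apply Finset.eq_of_subset_of_card_le
      · exact fun x hx => Finset.mem_inter.mpr ⟨hg2' hx, hg3' hx⟩
      · rw [hee] at hc; omega
    rw [h1, h2, hee]
  intro z hz
  -- third point map
  have hthird : ∀ L : Finset S, ∃ x : S, L ∈ Sides → x ∈ L ∧ x ∉ Y := by
    intro L
    by_cases hL : L ∈ Sides
    · obtain ⟨hL1, hL2⟩ := Finset.mem_filter.mp hL
      have hc3 : L.card = 3 := M.card3 L hL1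
      have : (L \ Y).card = 1 := by
        have := Finset.card_inter_add_card_sdiff L Y
        omega
      obtain ⟨x, hx⟩ := Finset.card_eq_one.mp this
      have hxL : x ∈ L \ Y := hx ▸ Finset.mem_singleton_self x
      exact ⟨x, fun _ => ⟨(Finset.mem_sdiff.mp hxL).1, (Finset.mem_sdiff.mp hxL).2⟩⟩
    · exact ⟨z, fun h => absurd h hL⟩
  choose th hth using hthird
  have hthinj : Set.InjOn th ↑Sides := by
    intro L hL L' hL' hLL
    by_contra hne
    rw [Finset.mem_coe] at hL hL'
    obtain ⟨ht1, ht2⟩ := hth L hL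
    obtain ⟨ht1', ht2'⟩ := hth L' hL'
    obtain ⟨hL1, hL2⟩ := Finset.mem_filter.mp hL
    obtain ⟨hL1', hL2'⟩ := Finset.mem_filter.mp hL'
    exact ht2 (hY.2 L L' ⟨hL1, hL2⟩ ⟨hL1', hL2'⟩ hne (th L) ht1 (hLL ▸ ht1'))
  have hmaps : ∀ L ∈ Sides, th L ∈ Finset.univ \ Y := by
    intro L hL
    exact Finset.mem_sdiff.mpr ⟨Finset.mem_univ _, (hth L hL).2⟩
  have himg : Sides.image th = Finset.univ \ Y := by
    apply Finset.eq_of_subset_of_card_le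
    · intro x hx
      obtain ⟨L, hL, rfl⟩ := Finset.mem_image.mp hx
      exact hmaps L hL
    · rw [Finset.card_image_of_injOn hthinj]
      have h1 : (Finset.univ \ Y).card = Fintype.card S - Y.card := by
        rw [Finset.card_sdiff_of_subset (Finset.subset_univ Y), Finset.card_univ]
      have h2 : (Y.powersetCard 2).card = Nat.choose Y.card 2 :=
        Finset.card_powersetCard 2 Y
      omega
  have hzmem : z ∈ Sides.image th := by
    rw [himg]
    exact Finset.mem_sdiff.mpr ⟨Finset.mem_univ _, hz⟩
  obtain ⟨L, hL, rfl⟩ := Finset.mem_image.mp hzmem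
  obtain ⟨hL1, hL2⟩ := Finset.mem_filter.mp hL
  exact ⟨L, hL1, (hth L hL).1, hL2⟩

/-- Two distinct free `K`-graphs of the same cardinality meet. -/
lemma inter_nonempty [Fintype S] {Y Y' : Finset S}
    (hY : FreelyContains M Y)
    (hcc : Y.card = Y'.card) (hne : Y ≠ Y')
    (hcard : Fintype.card S = Nat.choose Y.card 2 + Y.card)
    (hall' : ∀ L ∈ M.lines, ∀ y ∈ Y', y ∈ L → (L ∩ Y').card = 2) :
    (Y ∩ Y').Nonempty := by
  classical
  have hzz : ∃ z ∈ Y', z ∉ Y := by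
    by_contra hc
    push_neg at hc
    exact hne (Finset.eq_of_subset_of_card_le hc (le_of_eq hcc)).symm
  obtain ⟨z, hzY', hzY⟩ := hzz
  obtain ⟨L, hL, hzL, hc2⟩ := exists_side M hY hcard z hzY
  have hc2' : (L ∩ Y').card = 2 := hall' L hL z hzY' hzL
  have hc3 : L.card = 3 := M.card3 L hL
  have hU : ((L ∩ Y) ∪ (L ∩ Y')).card ≤ 3 := by
    refine le_trans (Finset.card_le_card ?_) (le_of_eq hc3)
    intro x hx
    rcases Finset.mem_union.mp hx with h | h
    · exact (Finset.mem_inter.mp h).1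
    · exact (Finset.mem_inter.mp h).1
  have := Finset.card_inter_add_card_union (L ∩ Y) (L ∩ Y')
  have hI : ((L ∩ Y) ∩ (L ∩ Y')).Nonempty := by
    rw [← Finset.card_pos]; omega
  obtain ⟨x, hx⟩ := hI
  simp only [Finset.mem_inter] at hx
  exact ⟨x, Finset.mem_inter.mpr ⟨hx.1.2, hx.2.2⟩⟩

/-- Two distinct free `K`-graphs of the same cardinality meet in at most one
point. -/
lemma inter_subsingleton {Y Y' : Finset S}
    (hY : FreelyContains M Y) (hY' : FreelyContains M Y')
    (hcc : Y.card = Y'.card) (hne : Y ≠ Y')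
    (hall' : ∀ L ∈ M.lines, ∀ y ∈ Y', y ∈ L → (L ∩ Y').card = 2) :
    ∀ x ∈ Y ∩ Y', ∀ y ∈ Y ∩ Y', x = y := by
  classical
  intro x hx y hy
  by_contra hxy
  obtain ⟨hxY, hxY'⟩ := Finset.mem_inter.mp hx
  obtain ⟨hyY, hyY'⟩ := Finset.mem_inter.mp hy
  have haa : ∃ a ∈ Y, a ∉ Y' := by
    by_contra hc
    push_neg at hc
    exact hne (Finset.eq_of_subset_of_card_le hc (le_of_eq hcc.symm))
  obtain ⟨a, haY, haY'⟩ := haa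
  have hax : a ≠ x := fun h => haY' (h ▸ hxY')
  have hay : a ≠ y := fun h => haY' (h ▸ hyY')
  obtain ⟨L1, hL1, haL1, hxL1, hc1⟩ := hY.1 a haY x hxY hax
  obtain ⟨L2, hL2, haL2, hyL2, hc2⟩ := hY.1 a haY y hyY hay
  have hL12 : L1 ≠ L2 := by
    intro h
    subst h
    have : ({a, x, y} : Finset S) ⊆ L1 ∩ Y := by
      intro u hu
      simp only [Finset.mem_insert, Finset.mem_singleton] at hu
      rcases hu with rfl | rfl | rfl
      · exact Finset.mem_inter.mpr ⟨haL1, haY⟩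
      · exact Finset.mem_inter.mpr ⟨hxL1, hxY⟩
      · exact Finset.mem_inter.mpr ⟨hyL2, hyY⟩
    have hcc3 : ({a, x, y} : Finset S).card = 3 := by
      rw [Finset.card_insert_of_notMem (by simp [hax, hay]),
        Finset.card_insert_of_notMem (by simpa using hxy), Finset.card_singleton]
    have := Finset.card_le_card this
    omega
  have hs1 : (L1 ∩ Y').card = 2 := hall' L1 hL1 x hxY' hxL1
  have hs2 : (L2 ∩ Y').card = 2 := hall' L2 hL2 y hyY' hyL2
  exact haY' (hY'.2 L1 L2 ⟨hL1, hs1⟩ ⟨hL2, hs2⟩ hL12 a haL1 haL2)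

/-- No point lies on three distinct free `K`-graphs (of equal size, with the
right ranks). -/
lemma no_triple {Y1 Y2 Y3 : Finset S} {p : S}
    (hp1 : p ∈ Y1) (hp2 : p ∈ Y2) (hp3 : p ∈ Y3)
    (hrank : 1 ≤ pointRank M p)
    (hall1 : ∀ L ∈ M.lines, ∀ y ∈ Y1, y ∈ L → (L ∩ Y1).card = 2)
    (hall2 : ∀ L ∈ M.lines, ∀ y ∈ Y2, y ∈ L → (L ∩ Y2).card = 2)
    (hall3 : ∀ L ∈ M.lines, ∀ y ∈ Y3, y ∈ L → (L ∩ Y3).card = 2)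
    (h12 : ∀ x ∈ Y1 ∩ Y2, ∀ y ∈ Y1 ∩ Y2, x = y)
    (h13 : ∀ x ∈ Y1 ∩ Y3, ∀ y ∈ Y1 ∩ Y3, x = y)
    (h23 : ∀ x ∈ Y2 ∩ Y3, ∀ y ∈ Y2 ∩ Y3, x = y) : False := by
  classical
  have hT : (M.lines.filter (fun L => p ∈ L)).Nonempty := by
    rw [← Finset.card_pos]
    exact lt_of_lt_of_le Nat.zero_lt_one hrank
  obtain ⟨L, hLmem⟩ := hT
  obtain ⟨hL, hpL⟩ := Finset.mem_filter.mp hLmem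
  have hc3 : L.card = 3 := M.card3 L hL
  have key : ∀ (Y : Finset S), p ∈ Y →
      (∀ L' ∈ M.lines, ∀ y ∈ Y, y ∈ L' → (L' ∩ Y).card = 2) →
      ∃ a, a ∈ L.erase p ∧ a ∈ Y := by
    intro Y hpY hall
    have hc2 : (L ∩ Y).card = 2 := hall L hL p hpY hpL
    have : ((L ∩ Y).erase p).card = 1 := by
      rw [Finset.card_erase_of_mem (Finset.mem_inter.mpr ⟨hpL, hpY⟩), hc2]
    obtain ⟨a, ha⟩ := Finset.card_eq_one.mp this
    have haa : a ∈ (L ∩ Y).erase p := ha ▸ Finset.mem_singleton_self a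
    obtain ⟨hap, haLY⟩ := Finset.mem_erase.mp haa
    obtain ⟨haL, haY⟩ := Finset.mem_inter.mp haLY
    exact ⟨a, Finset.mem_erase.mpr ⟨hap, haL⟩, haY⟩
  obtain ⟨a1, ha1L, ha1Y⟩ := key Y1 hp1 hall1
  obtain ⟨a2, ha2L, ha2Y⟩ := key Y2 hp2 hall2
  obtain ⟨a3, ha3L, ha3Y⟩ := key Y3 hp3 hall3
  have hcL : (L.erase p).card = 2 := by
    rw [Finset.card_erase_of_mem hpL, hc3]
  have hpair : a1 = a2 ∨ a1 = a3 ∨ a2 = a3 := by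
    by_contra hc
    push_neg at hc
    have : ({a1, a2, a3} : Finset S) ⊆ L.erase p := by
      intro u hu
      simp only [Finset.mem_insert, Finset.mem_singleton] at hu
      rcases hu with rfl | rfl | rfl
      · exact ha1L
      · exact ha2L
      · exact ha3L
    have h3 : ({a1, a2, a3} : Finset S).card = 3 := by
      rw [Finset.card_insert_of_notMem (by simp [hc.1, hc.2.1]),
        Finset.card_insert_of_notMem (by simpa using hc.2.2), Finset.card_singleton]
    have := Finset.card_le_card this
    omega
  have hp1' : a1 ≠ p := (Finset.mem_erase.mp ha1L).1
  have hp2' : a2 ≠ p := (Finset.mem_erase.mp ha2L).1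
  have hp3' : a3 ≠ p := (Finset.mem_erase.mp ha3L).1
  rcases hpair with h | h | h
  · exact hp1' (h12 a1 (Finset.mem_inter.mpr ⟨ha1Y, h ▸ ha2Y⟩) p
      (Finset.mem_inter.mpr ⟨hp1, hp2⟩))
  · exact hp1' (h13 a1 (Finset.mem_inter.mpr ⟨ha1Y, h ▸ ha3Y⟩) p
      (Finset.mem_inter.mpr ⟨hp1, hp3⟩))
  · exact hp2' (h23 a2 (Finset.mem_inter.mpr ⟨ha2Y, h ▸ ha3Y⟩) p
      (Finset.mem_inter.mpr ⟨hp2, hp3⟩))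

end GeneralLemmas


set_option linter.unusedSectionVars false

section Transport

variable {S T : Type} [DecidableEq S] [DecidableEq T]

/-- Transport of a partial Steiner triple system along a bijection. -/
noncomputable def PSTS.map (e : S ≃ T) (M : PSTS S) : PSTS T where
  lines := M.lines.image (Finset.image e)
  card3 := by
    intro L hL
    obtain ⟨L0, hL0, rfl⟩ := Finset.mem_image.mp hL
    rw [Finset.card_image_of_injective _ e.injective]
    exact M.card3 L0 hL0
  unique := by
    intro L1 hL1 L2 hL2 a b hab ha1 hb1 ha2 hb2
    obtain ⟨K1, hK1, rfl⟩ := Finset.mem_image.mp hL1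
    obtain ⟨K2, hK2, rfl⟩ := Finset.mem_image.mp hL2
    have hmem : ∀ (K : Finset S) (x : T), x ∈ K.image e → e.symm x ∈ K := by
      intro K x hx
      obtain ⟨y, hy, rfl⟩ := Finset.mem_image.mp hx
      simpa using hy
    have : K1 = K2 := by
      refine M.unique K1 hK1 K2 hK2 (e.symm a) (e.symm b) ?_
        (hmem _ _ ha1) (hmem _ _ hb1) (hmem _ _ ha2) (hmem _ _ hb2)
      intro h
      exact hab (by simpa using congrArg e h)
    rw [this]

lemma PSTS.map_lines (e : S ≃ T) (M : PSTS S) :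
    (M.map e).lines = M.lines.image (Finset.image e) := rfl

lemma image_image_symm (e : S ≃ T) (X : Finset T) :
    (X.image e.symm).image e = X := by
  rw [Finset.image_image]
  simp

lemma image_symm_image (e : S ≃ T) (X : Finset S) :
    (X.image e).image e.symm = X := by
  rw [Finset.image_image]
  simp

lemma PSTS.map_symm_map (e : S ≃ T) (M : PSTS S) :
    (M.map e).map e.symm = M := by
  cases M with
  | mk lines card3 unique =>
    simp only [PSTS.map, PSTS.mk.injEq]
    rw [Finset.image_image]
    rw [show (Finset.image e.symm ∘ Finset.image e) = id from funext fun L => image_symm_image e L]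
    exact Finset.image_id

lemma freely_map (e : S ≃ T) (M : PSTS S) (X : Finset S)
    (h : FreelyContains M X) : FreelyContains (M.map e) (X.image e) := by
  constructor
  · intro a ha b hb hab
    obtain ⟨a0, ha0, rfl⟩ := Finset.mem_image.mp ha
    obtain ⟨b0, hb0, rfl⟩ := Finset.mem_image.mp hb
    obtain ⟨L, hL, h1, h2, h3⟩ := h.1 a0 ha0 b0 hb0 (fun hc => hab (by rw [hc]))
    refine ⟨L.image e, Finset.mem_image_of_mem _ hL, Finset.mem_image_of_mem _ h1,
      Finset.mem_image_of_mem _ h2, ?_⟩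
    rw [← Finset.image_inter _ _ e.injective,
      Finset.card_image_of_injective _ e.injective]
    exact h3
  · intro L1 L2 hs1 hs2 hne p hp1 hp2
    obtain ⟨K1, hK1, rfl⟩ := Finset.mem_image.mp hs1.1
    obtain ⟨K2, hK2, rfl⟩ := Finset.mem_image.mp hs2.1
    have hc1 : (K1 ∩ X).card = 2 := by
      have := hs1.2
      rw [← Finset.image_inter _ _ e.injective,
        Finset.card_image_of_injective _ e.injective] at this
      exact this
    have hc2 : (K2 ∩ X).card = 2 := by
      have := hs2.2
      rw [← Finset.image_inter _ _ e.injective,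
        Finset.card_image_of_injective _ e.injective] at this
      exact this
    have hKne : K1 ≠ K2 := fun hc => hne (by rw [hc])
    obtain ⟨p1, hp1', rfl⟩ := Finset.mem_image.mp hp1
    have hp2'' : p1 ∈ K2 := by
      obtain ⟨p2, hp2', hpe⟩ := Finset.mem_image.mp hp2
      rwa [e.injective hpe.symm]
    exact Finset.mem_image_of_mem _ (h.2 K1 K2 ⟨hK1, hc1⟩ ⟨hK2, hc2⟩ hKne p1 hp1' hp2'')

lemma freely_map_iff (e : S ≃ T) (M : PSTS S) (X : Finset S) :
    FreelyContains (M.map e) (X.image e) ↔ FreelyContains M X := by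
  constructor
  · intro h
    have := freely_map e.symm (M.map e) (X.image e) h
    rwa [PSTS.map_symm_map, image_symm_image] at this
  · exact freely_map e M X

lemma pointRank_map (e : S ≃ T) (M : PSTS S) (p : S) :
    pointRank (M.map e) (e p) = pointRank M p := by
  unfold pointRank
  rw [PSTS.map_lines, Finset.filter_image]
  rw [Finset.card_image_of_injective _ (Finset.image_injective e.injective)]
  congr 1
  apply Finset.filter_congr
  intro L _
  simp only [Finset.mem_image]
  constructor
  · rintro ⟨x, hx, hxe⟩
    rwa [← e.injective hxe]
  · intro hp
    exact ⟨p, hp, rfl⟩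

lemma isBinomial_map [Fintype S] [Fintype T] (e : S ≃ T) (M : PSTS S) (k : ℕ)
    (h : IsBinomial M k) : IsBinomial (M.map e) k := by
  obtain ⟨h1, h2, h3⟩ := h
  refine ⟨by rw [← h1]; exact (Fintype.card_congr e).symm, ?_, ?_⟩
  · rw [PSTS.map_lines,
      Finset.card_image_of_injective _ (Finset.image_injective e.injective)]
    exact h2
  · intro p
    have := pointRank_map e M (e.symm p)
    rw [e.apply_symm_apply] at this
    rw [this]
    exact h3 _

lemma exactly_map (e : S ≃ T) (M : PSTS S) (j k : ℕ)
    (h : ExactlyKGraphs M j k) : ExactlyKGraphs (M.map e) j k := by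
  obtain ⟨f, hinj, hprop, hex⟩ := h
  refine ⟨fun i => (f i).image e, ?_, ?_, ?_⟩
  · intro i i' hii
    exact hinj (Finset.image_injective e.injective hii)
  · intro i
    refine ⟨?_, freely_map e M (f i) (hprop i).2⟩
    rw [Finset.card_image_of_injective _ e.injective]
    exact (hprop i).1
  · intro X hXc hXf
    have hX' : X = (X.image e.symm).image e := (image_image_symm e X).symm
    have hfc : FreelyContains M (X.image e.symm) := by
      rw [← freely_map_iff e]
      rwa [← hX']
    have hcc : (X.image e.symm).card = j := by
      rwa [Finset.card_image_of_injective _ e.symm.injective]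
    obtain ⟨i, hi⟩ := hex _ hcc hfc
    exact ⟨i, by rw [hX', hi]⟩

end Transport


section Construction

/-- The edges of the complete graph `K_n`. -/
def Edges (n : ℕ) : Finset (Finset (Fin n)) := Finset.powersetCard 2 Finset.univ

lemma mem_Edges {n : ℕ} {e : Finset (Fin n)} : e ∈ Edges n ↔ e.card = 2 := by
  simp [Edges, Finset.mem_powersetCard, Finset.subset_univ]

lemma card_Edges (n : ℕ) : (Edges n).card = Nat.choose n 2 := by
  rw [Edges, Finset.card_powersetCard, Finset.card_univ, Fintype.card_fin]

/-- The new line corresponding to an edge `e` of `K_n`, labelled by `w e`. -/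
def lineOf {n d : ℕ} (w : Finset (Fin n) → Fin d) (e : Finset (Fin n)) :
    Finset (Fin d ⊕ Fin n) :=
  insert (Sum.inl (w e)) (e.image Sum.inr)

lemma mem_lineOf_inl {n d : ℕ} {w : Finset (Fin n) → Fin d} {e : Finset (Fin n)}
    {z : Fin d} : Sum.inl z ∈ lineOf w e ↔ w e = z := by
  simp only [lineOf, Finset.mem_insert, Finset.mem_image]
  constructor
  · rintro (h | ⟨x, _, h⟩)
    · exact (Sum.inl_injective h).symm
    · exact absurd h (by simp)
  · intro h
    exact Or.inl (by rw [h])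

lemma mem_lineOf_inr {n d : ℕ} {w : Finset (Fin n) → Fin d} {e : Finset (Fin n)}
    {x : Fin n} : Sum.inr x ∈ lineOf w e ↔ x ∈ e := by
  simp only [lineOf, Finset.mem_insert, Finset.mem_image]
  constructor
  · rintro (h | ⟨y, hy, h⟩)
    · exact absurd h (by simp)
    · exact Sum.inr_injective h ▸ hy
  · intro h
    exact Or.inr ⟨x, h, rfl⟩

lemma lineOf_injective {n d : ℕ} (w : Finset (Fin n) → Fin d) :
    Function.Injective (lineOf w) := by
  intro e e' h
  ext x
  constructor
  · intro hx
    have : Sum.inr x ∈ lineOf w e := mem_lineOf_inr.mpr hx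
    rw [h] at this
    exact mem_lineOf_inr.mp this
  · intro hx
    have : Sum.inr x ∈ lineOf w e' := mem_lineOf_inr.mpr hx
    rw [← h] at this
    exact mem_lineOf_inr.mp this

lemma card_lineOf {n d : ℕ} (w : Finset (Fin n) → Fin d) {e : Finset (Fin n)}
    (he : e.card = 2) : (lineOf w e).card = 3 := by
  rw [lineOf, Finset.card_insert_of_notMem (by
    intro hmem
    obtain ⟨x, _, hx⟩ := Finset.mem_image.mp hmem
    exact absurd hx (by simp)),
    Finset.card_image_of_injective _ (fun a b h => Sum.inr.injEq a b ▸ h), he]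

lemma mem_image_inl_iff {n d : ℕ} {L : Finset (Fin d)} {z : Fin d} :
    Sum.inl z ∈ L.image (Sum.inl : Fin d → Fin d ⊕ Fin n) ↔ z ∈ L := by
  constructor
  · intro h
    obtain ⟨y, hy, hye⟩ := Finset.mem_image.mp h
    exact Sum.inl_injective hye ▸ hy
  · exact fun h => Finset.mem_image_of_mem _ h

lemma notMem_image_inl {n d : ℕ} (L : Finset (Fin d)) (x : Fin n) :
    Sum.inr x ∉ L.image (Sum.inl : Fin d → Fin d ⊕ Fin n) := by
  intro h
  obtain ⟨y, _, hy⟩ := Finset.mem_image.mp h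
  exact absurd hy (by simp)

lemma image_inl_ne_lineOf {n d : ℕ} (w : Finset (Fin n) → Fin d)
    {L : Finset (Fin d)} {e : Finset (Fin n)} (he : e ∈ Edges n) :
    L.image (Sum.inl : Fin d → Fin d ⊕ Fin n) ≠ lineOf w e := by
  intro h
  have hne : e.Nonempty := Finset.card_pos.mp (by rw [mem_Edges.mp he]; omega)
  obtain ⟨x, hx⟩ := hne
  have : Sum.inr x ∈ lineOf w e := mem_lineOf_inr.mpr hx
  rw [← h] at this
  exact notMem_image_inl L x this

/-- Lines of the extended configuration: old lines plus one new line per edge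
of `K_n`. -/
def mkLines {n d : ℕ} (N : PSTS (Fin d)) (w : Finset (Fin n) → Fin d) :
    Finset (Finset (Fin d ⊕ Fin n)) :=
  N.lines.image (Finset.image Sum.inl) ∪ (Edges n).image (lineOf w)

lemma inl_inj_finset {n d : ℕ} :
    Function.Injective (Finset.image (Sum.inl : Fin d → Fin d ⊕ Fin n)) :=
  Finset.image_injective Sum.inl_injective

/-- The extended configuration as a PSTS. -/
def mkM {n d : ℕ} (N : PSTS (Fin d)) (w : Finset (Fin n) → Fin d)
    (hw1 : Set.InjOn w ↑(Edges n)) : PSTS (Fin d ⊕ Fin n) where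
  lines := mkLines N w
  card3 := by
    intro L hL
    rcases Finset.mem_union.mp hL with h | h
    · obtain ⟨L0, hL0, rfl⟩ := Finset.mem_image.mp h
      rw [Finset.card_image_of_injective _ Sum.inl_injective]
      exact N.card3 L0 hL0
    · obtain ⟨e, he, rfl⟩ := Finset.mem_image.mp h
      exact card_lineOf w (mem_Edges.mp he)
  unique := by
    intro L1 hL1 L2 hL2 a b hab ha1 hb1 ha2 hb2
    rcases Finset.mem_union.mp hL1 with h1 | h1 <;>
      rcases Finset.mem_union.mp hL2 with h2 | h2
    · -- old / old
      obtain ⟨K1, hK1, rfl⟩ := Finset.mem_image.mp h1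
      obtain ⟨K2, hK2, rfl⟩ := Finset.mem_image.mp h2
      -- a and b are inl points
      obtain ⟨a0, ha0, rfl⟩ := Finset.mem_image.mp ha1
      obtain ⟨b0, hb0, rfl⟩ := Finset.mem_image.mp hb1
      have hab0 : a0 ≠ b0 := fun h => hab (by rw [h])
      rw [N.unique K1 hK1 K2 hK2 a0 b0 hab0 ha0 hb0
        (mem_image_inl_iff.mp ha2) (mem_image_inl_iff.mp hb2)]
    · -- old / new : at most one common point
      exfalso
      obtain ⟨K1, hK1, rfl⟩ := Finset.mem_image.mp h1
      obtain ⟨e, he, rfl⟩ := Finset.mem_image.mp h2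
      -- a,b ∈ old line so both inl ; in new line, inl part is only w e
      obtain ⟨a0, _, rfl⟩ := Finset.mem_image.mp ha1
      obtain ⟨b0, _, rfl⟩ := Finset.mem_image.mp hb1
      have hae : w e = a0 := mem_lineOf_inl.mp ha2
      have hbe : w e = b0 := mem_lineOf_inl.mp hb2
      exact hab (by rw [← hae, ← hbe])
    · -- new / old
      exfalso
      obtain ⟨e, he, rfl⟩ := Finset.mem_image.mp h1
      obtain ⟨K2, hK2, rfl⟩ := Finset.mem_image.mp h2
      obtain ⟨a0, _, rfl⟩ := Finset.mem_image.mp ha2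
      obtain ⟨b0, _, rfl⟩ := Finset.mem_image.mp hb2
      have hae : w e = a0 := mem_lineOf_inl.mp ha1
      have hbe : w e = b0 := mem_lineOf_inl.mp hb1
      exact hab (by rw [← hae, ← hbe])
    · -- new / new
      obtain ⟨e, he, rfl⟩ := Finset.mem_image.mp h1
      obtain ⟨e', he', rfl⟩ := Finset.mem_image.mp h2
      suffices hee : e = e' by rw [hee]
      by_contra hne
      -- common points : inl forces w e = w e', inr forces common vertex
      have hcom : ∀ x, x ∈ lineOf w e → x ∈ lineOf w e' → ∃ v : Fin n,
          x = Sum.inr v ∧ v ∈ e ∩ e' := by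
        intro x hx hx'
        cases x with
        | inl z =>
          exfalso
          have h1' : w e = z := mem_lineOf_inl.mp hx
          have h2' : w e' = z := mem_lineOf_inl.mp hx'
          exact hne (hw1 he he' (by rw [h1', h2']))
        | inr v =>
          exact ⟨v, rfl, Finset.mem_inter.mpr
            ⟨mem_lineOf_inr.mp hx, mem_lineOf_inr.mp hx'⟩⟩
      obtain ⟨va, hva, hvae⟩ := hcom a ha1 ha2
      obtain ⟨vb, hvb, hvbe⟩ := hcom b hb1 hb2
      -- e ∩ e' has at most one element since e ≠ e' are 2-sets
      have hint : e ∩ e' ≠ e := by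
        intro hc
        have hsub : e ⊆ e' := by rw [← hc]; exact Finset.inter_subset_right
        exact hne (Finset.eq_of_subset_of_card_le hsub
          (by rw [mem_Edges.mp he, mem_Edges.mp he']))
      have hcard : (e ∩ e').card ≤ 1 := by
        by_contra hc
        push_neg at hc
        have hsub : e ∩ e' ⊆ e := Finset.inter_subset_left
        have := Finset.eq_of_subset_of_card_le hsub
          (by rw [mem_Edges.mp he]; omega)
        exact hint this
      have : va = vb := by
        by_contra hvv
        have : ({va, vb} : Finset (Fin n)) ⊆ e ∩ e' := by
          intro u hu
          rcases Finset.mem_insert.mp hu with rfl | hu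
          · exact hvae
          · rw [Finset.mem_singleton.mp hu]; exact hvbe
        have hcc := Finset.card_le_card this
        rw [Finset.card_insert_of_notMem (by simpa using hvv),
          Finset.card_singleton] at hcc
        omega
      exact absurd (hva.trans (this ▸ hvb.symm)) hab

lemma mkM_disjoint {n d : ℕ} (N : PSTS (Fin d)) (w : Finset (Fin n) → Fin d) :
    Disjoint (N.lines.image (Finset.image Sum.inl)) ((Edges n).image (lineOf w)) := by
  rw [Finset.disjoint_left]
  intro L h1 h2
  obtain ⟨L0, _, rfl⟩ := Finset.mem_image.mp h1
  obtain ⟨e, he, heq⟩ := Finset.mem_image.mp h2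
  exact image_inl_ne_lineOf w he heq.symm

lemma edges_at {n : ℕ} (i : Fin n) :
    (Edges n).filter (fun e => i ∈ e) =
      (Finset.univ.erase i).image (fun j => ({i, j} : Finset (Fin n))) := by
  ext e
  simp only [Finset.mem_filter, Finset.mem_image, Finset.mem_erase, Finset.mem_univ,
    and_true]
  constructor
  · rintro ⟨he, hie⟩
    have hc : (e.erase i).card = 1 := by
      rw [Finset.card_erase_of_mem hie, mem_Edges.mp he]
    obtain ⟨j, hj⟩ := Finset.card_eq_one.mp hc
    have hji : j ∈ e.erase i := hj ▸ Finset.mem_singleton_self j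
    refine ⟨j, (Finset.mem_erase.mp hji).1, ?_⟩
    rw [← Finset.insert_erase hie, hj]
  · rintro ⟨j, hji, rfl⟩
    constructor
    · rw [mem_Edges, Finset.card_insert_of_notMem (by simpa using (Ne.symm hji)),
        Finset.card_singleton]
    · exact Finset.mem_insert_self i _

lemma card_edges_at {n : ℕ} (i : Fin n) :
    ((Edges n).filter (fun e => i ∈ e)).card = n - 1 := by
  rw [edges_at]
  rw [Finset.card_image_of_injOn]
  · rw [Finset.card_erase_of_mem (Finset.mem_univ i), Finset.card_univ,
      Fintype.card_fin]
  · intro j hj j' hj' hjj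
    rw [Finset.mem_coe, Finset.mem_erase] at hj hj'
    have hjj' : ({i, j} : Finset (Fin n)) = {i, j'} := hjj
    have : j ∈ ({i, j'} : Finset (Fin n)) := hjj' ▸ Finset.mem_insert_of_mem
      (Finset.mem_singleton_self j)
    rcases Finset.mem_insert.mp this with h | h
    · exact absurd h hj.1
    · exact Finset.mem_singleton.mp h

lemma mkM_pointRank_inl {n d : ℕ} (N : PSTS (Fin d)) (w : Finset (Fin n) → Fin d)
    (hw1 : Set.InjOn w ↑(Edges n)) (hw2 : (Edges n).image w = Finset.univ)
    (z : Fin d) : pointRank (mkM N w hw1) (Sum.inl z) = pointRank N z + 1 := by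
  classical
  unfold pointRank
  have hlines : (mkM N w hw1).lines = mkLines N w := rfl
  rw [hlines, mkLines, Finset.filter_union]
  rw [Finset.card_union_of_disjoint (Finset.disjoint_filter_filter (mkM_disjoint N w))]
  congr 1
  · rw [Finset.filter_image]
    rw [Finset.card_image_of_injective _ inl_inj_finset]
    congr 1
    apply Finset.filter_congr
    intro L _
    exact ⟨fun h => mem_image_inl_iff.mp h, fun h => mem_image_inl_iff.mpr h⟩
  · rw [Finset.filter_image]
    have hz : z ∈ (Edges n).image w := by rw [hw2]; exact Finset.mem_univ z
    obtain ⟨e0, he0, he0z⟩ := Finset.mem_image.mp hz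
    have : (Edges n).filter (fun e => Sum.inl z ∈ lineOf w e) = {e0} := by
      ext e
      simp only [Finset.mem_filter, Finset.mem_singleton]
      constructor
      · rintro ⟨he, hmem⟩
        exact hw1 he he0 ((mem_lineOf_inl.mp hmem).trans he0z.symm)
      · rintro rfl
        exact ⟨he0, mem_lineOf_inl.mpr he0z⟩
    rw [this, Finset.card_image_of_injective _ (lineOf_injective w),
      Finset.card_singleton]

lemma mkM_pointRank_inr {n d : ℕ} (N : PSTS (Fin d)) (w : Finset (Fin n) → Fin d)
    (hw1 : Set.InjOn w ↑(Edges n)) (i : Fin n) :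
    pointRank (mkM N w hw1) (Sum.inr i) = n - 1 := by
  classical
  unfold pointRank
  have hlines : (mkM N w hw1).lines = mkLines N w := rfl
  rw [hlines, mkLines, Finset.filter_union]
  rw [Finset.card_union_of_disjoint (Finset.disjoint_filter_filter (mkM_disjoint N w))]
  have h1 : (N.lines.image (Finset.image Sum.inl)).filter
      (fun L => Sum.inr i ∈ L) = ∅ := by
    rw [Finset.filter_eq_empty_iff]
    intro L hL
    obtain ⟨L0, _, rfl⟩ := Finset.mem_image.mp hL
    exact notMem_image_inl L0 i
  have h2 : ((Edges n).image (lineOf w)).filter (fun L => Sum.inr i ∈ L) =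
      ((Edges n).filter (fun e => i ∈ e)).image (lineOf w) := by
    rw [Finset.filter_image]
    congr 1
    apply Finset.filter_congr
    intro e _
    exact ⟨fun h => mem_lineOf_inr.mp h, fun h => mem_lineOf_inr.mpr h⟩
  rw [h1, h2, Finset.card_empty,
    Finset.card_image_of_injective _ (lineOf_injective w), card_edges_at]
  omega

lemma mkM_isBinomial {n d : ℕ} (hd : d = Nat.choose n 2) (N : PSTS (Fin d))
    (hNb : IsBinomial N n) (w : Finset (Fin n) → Fin d)
    (hw1 : Set.InjOn w ↑(Edges n)) (hw2 : (Edges n).image w = Finset.univ)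
    (hn : 3 ≤ n) : IsBinomial (mkM N w hw1) (n + 1) := by
  obtain ⟨hb1, hb2, hb3⟩ := hNb
  refine ⟨?_, ?_, ?_⟩
  · rw [Fintype.card_sum, Fintype.card_fin, Fintype.card_fin, hd]
    have h1 : Nat.choose (n + 1) 2 = Nat.choose n 1 + Nat.choose n 2 :=
      Nat.choose_succ_succ n 1
    rw [h1, Nat.choose_one_right]
    omega
  · have hlines : (mkM N w hw1).lines = mkLines N w := rfl
    rw [hlines, mkLines, Finset.card_union_of_disjoint (mkM_disjoint N w),
      Finset.card_image_of_injective _ inl_inj_finset,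
      Finset.card_image_of_injective _ (lineOf_injective w), hb2, card_Edges]
    have h1 : Nat.choose (n + 1) 3 = Nat.choose n 2 + Nat.choose n 3 :=
      Nat.choose_succ_succ n 2
    omega
  · intro p
    cases p with
    | inl z =>
      rw [mkM_pointRank_inl N w hw1 hw2 z, hb3 z]
      omega
    | inr i =>
      rw [mkM_pointRank_inr N w hw1 i]
      omega

end Construction


section Freely

variable {n d : ℕ}

/-- The new `K_n` on the adjoined points is freely contained. -/
lemma freely_X (N : PSTS (Fin d)) (w : Finset (Fin n) → Fin d)
    (hw1 : Set.InjOn w ↑(Edges n)) :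
    FreelyContains (mkM N w hw1) ((Finset.univ : Finset (Fin n)).image Sum.inr) := by
  classical
  set X := (Finset.univ : Finset (Fin n)).image (Sum.inr : Fin n → Fin d ⊕ Fin n)
    with hXdef
  have hXmem : ∀ x : Fin d ⊕ Fin n, x ∈ X ↔ ∃ v : Fin n, x = Sum.inr v := by
    intro x
    simp only [hXdef, Finset.mem_image, Finset.mem_univ, true_and]
    constructor
    · rintro ⟨v, rfl⟩; exact ⟨v, rfl⟩
    · rintro ⟨v, rfl⟩; exact ⟨v, rfl⟩
  constructor
  · intro a ha b hb hab
    obtain ⟨i, rfl⟩ := (hXmem a).mp ha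
    obtain ⟨j, rfl⟩ := (hXmem b).mp hb
    have hij : i ≠ j := fun h => hab (by rw [h])
    have he : ({i, j} : Finset (Fin n)) ∈ Edges n := by
      rw [mem_Edges, Finset.card_insert_of_notMem (by simpa using hij),
        Finset.card_singleton]
    refine ⟨lineOf w {i, j}, ?_, ?_, ?_, ?_⟩
    · exact Finset.mem_union_right _ (Finset.mem_image_of_mem _ he)
    · exact mem_lineOf_inr.mpr (Finset.mem_insert_self i _)
    · exact mem_lineOf_inr.mpr (Finset.mem_insert_of_mem (Finset.mem_singleton_self j))
    · have : lineOf w {i, j} ∩ X = ({i, j} : Finset (Fin n)).image Sum.inr := by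
        ext x
        simp only [Finset.mem_inter]
        constructor
        · rintro ⟨hx1, hx2⟩
          obtain ⟨v, rfl⟩ := (hXmem x).mp hx2
          exact Finset.mem_image_of_mem _ (mem_lineOf_inr.mp hx1)
        · intro hx
          obtain ⟨v, hv, rfl⟩ := Finset.mem_image.mp hx
          exact ⟨mem_lineOf_inr.mpr hv, (hXmem _).mpr ⟨v, rfl⟩⟩
      rw [this, Finset.card_image_of_injective _ Sum.inr_injective,
        Finset.card_insert_of_notMem (by simpa using hij), Finset.card_singleton]
  · intro L1 L2 hs1 hs2 hne p hp1 hp2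
    -- any common point is an inr point, hence in X
    cases p with
    | inr v => exact (hXmem _).mpr ⟨v, rfl⟩
    | inl z =>
      exfalso
      -- sides of X are new lines
      have hnew : ∀ L : Finset (Fin d ⊕ Fin n), IsSide (mkM N w hw1) X L →
          Sum.inl z ∈ L → ∃ e ∈ Edges n, L = lineOf w e ∧ w e = z := by
        intro L hs hzL
        rcases Finset.mem_union.mp hs.1 with h | h
        · exfalso
          obtain ⟨L0, _, rfl⟩ := Finset.mem_image.mp h
          have : L0.image Sum.inl ∩ X = ∅ := by
            rw [Finset.eq_empty_iff_forall_notMem]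
            intro x hx
            obtain ⟨hx1, hx2⟩ := Finset.mem_inter.mp hx
            obtain ⟨v, rfl⟩ := (hXmem x).mp hx2
            exact notMem_image_inl L0 v hx1
          have hc := hs.2
          rw [this] at hc
          simp at hc
        · obtain ⟨e, he, rfl⟩ := Finset.mem_image.mp h
          exact ⟨e, he, rfl, mem_lineOf_inl.mp hzL⟩
      obtain ⟨e1, he1, rfl, hz1⟩ := hnew L1 hs1 hp1
      obtain ⟨e2, he2, rfl, hz2⟩ := hnew L2 hs2 hp2
      exact hne (by rw [hw1 he1 he2 (by rw [hz1, hz2])])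

/-- Characterisation of the intersection of an old line with `Z_k`. -/
lemma old_inter_Z {Y0 : Finset (Fin d)} {i : Fin n}
    (L0 : Finset (Fin d)) :
    (L0.image Sum.inl) ∩ ((Y0.image Sum.inl ∪ {Sum.inr i}) : Finset (Fin d ⊕ Fin n)) =
      (L0 ∩ Y0).image Sum.inl := by
  ext x
  simp only [Finset.mem_inter, Finset.mem_union, Finset.mem_singleton]
  constructor
  · rintro ⟨hx1, hx2⟩
    obtain ⟨u, hu, rfl⟩ := Finset.mem_image.mp hx1
    rcases hx2 with h | h
    · exact Finset.mem_image_of_mem _ (Finset.mem_inter.mpr ⟨hu, mem_image_inl_iff.mp h⟩)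
    · exact absurd h (by simp)
  · intro hx
    obtain ⟨u, hu, rfl⟩ := Finset.mem_image.mp hx
    obtain ⟨hu1, hu2⟩ := Finset.mem_inter.mp hu
    exact ⟨Finset.mem_image_of_mem _ hu1, Or.inl (Finset.mem_image_of_mem _ hu2)⟩

/-- The extended `K`-graphs `Y_k ∪ {p_k}` are freely contained. -/
lemma freely_Z (N : PSTS (Fin d)) (w : Finset (Fin n) → Fin d)
    (hw1 : Set.InjOn w ↑(Edges n)) (Y0 : Finset (Fin d))
    (hY0f : FreelyContains N Y0) (i : Fin n)
    (hstar : ((Edges n).filter (fun e => i ∈ e)).image w = Y0) :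
    FreelyContains (mkM N w hw1) (Y0.image Sum.inl ∪ {Sum.inr i}) := by
  classical
  set Z := (Y0.image Sum.inl ∪ {Sum.inr i} : Finset (Fin d ⊕ Fin n)) with hZdef
  have hZinl : ∀ u : Fin d, Sum.inl u ∈ Z ↔ u ∈ Y0 := by
    intro u
    simp only [hZdef, Finset.mem_union, Finset.mem_singleton]
    constructor
    · rintro (h | h)
      · exact mem_image_inl_iff.mp h
      · exact absurd h (by simp)
    · intro h
      exact Or.inl (Finset.mem_image_of_mem _ h)
  have hZinr : ∀ v : Fin n, Sum.inr v ∈ Z ↔ v = i := by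
    intro v
    simp only [hZdef, Finset.mem_union, Finset.mem_singleton]
    constructor
    · rintro (h | h)
      · exfalso; exact notMem_image_inl Y0 v h
      · exact Sum.inr_injective h
    · rintro rfl
      exact Or.inr rfl
  -- the joining line from `p_i` to a point of `Y0`
  have hjoin : ∀ y ∈ Y0, ∃ e ∈ Edges n, i ∈ e ∧ w e = y := by
    intro y hy
    rw [← hstar] at hy
    obtain ⟨e, he, hwe⟩ := Finset.mem_image.mp hy
    obtain ⟨he1, he2⟩ := Finset.mem_filter.mp he
    exact ⟨e, he1, he2, hwe⟩
  have hstar' : ∀ e ∈ Edges n, i ∈ e → w e ∈ Y0 := by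
    intro e he hie
    rw [← hstar]
    exact Finset.mem_image_of_mem _ (Finset.mem_filter.mpr ⟨he, hie⟩)
  -- characterise new sides
  have hnewside : ∀ e ∈ Edges n, (lineOf w e ∩ Z).card = 2 → i ∈ e ∧ w e ∈ Y0 := by
    intro e he hc
    have hsub : lineOf w e ∩ Z ⊆ {Sum.inl (w e), Sum.inr i} := by
      intro x hx
      obtain ⟨hx1, hx2⟩ := Finset.mem_inter.mp hx
      cases x with
      | inl u =>
        rw [(mem_lineOf_inl.mp hx1)]
        exact Finset.mem_insert_self _ _
      | inr v =>
        rw [(hZinr v).mp hx2]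
        exact Finset.mem_insert_of_mem (Finset.mem_singleton_self _)
    have heq : lineOf w e ∩ Z = {Sum.inl (w e), Sum.inr i} := by
      apply Finset.eq_of_subset_of_card_le hsub
      rw [hc]
      refine le_trans (Finset.card_insert_le _ _) ?_
      rw [Finset.card_singleton]
    have h1 : Sum.inr i ∈ lineOf w e ∩ Z := by
      rw [heq]; exact Finset.mem_insert_of_mem (Finset.mem_singleton_self _)
    have h2 : Sum.inl (w e) ∈ lineOf w e ∩ Z := by
      rw [heq]; exact Finset.mem_insert_self _ _
    exact ⟨mem_lineOf_inr.mp (Finset.mem_inter.mp h1).1,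
      (hZinl _).mp (Finset.mem_inter.mp h2).2⟩
  constructor
  · -- joins exist
    intro a ha b hb hab
    rw [hZdef, Finset.mem_union] at ha hb
    rcases ha with ha | ha <;> rcases hb with hb | hb
    · -- two old points
      obtain ⟨y, hy, rfl⟩ := Finset.mem_image.mp ha
      obtain ⟨y', hy', rfl⟩ := Finset.mem_image.mp hb
      have hyy : y ≠ y' := fun h => hab (by rw [h])
      obtain ⟨L0, hL0, h1, h2, h3⟩ := hY0f.1 y hy y' hy' hyy
      refine ⟨L0.image Sum.inl, Finset.mem_union_left _ (Finset.mem_image_of_mem _ hL0),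
        Finset.mem_image_of_mem _ h1, Finset.mem_image_of_mem _ h2, ?_⟩
      rw [hZdef, old_inter_Z L0, Finset.card_image_of_injective _ Sum.inl_injective]
      exact h3
    · -- old and new point
      obtain ⟨y, hy, rfl⟩ := Finset.mem_image.mp ha
      rw [Finset.mem_singleton] at hb
      subst hb
      obtain ⟨e, he, hie, hwe⟩ := hjoin y hy
      refine ⟨lineOf w e, Finset.mem_union_right _ (Finset.mem_image_of_mem _ he),
        mem_lineOf_inl.mpr hwe, mem_lineOf_inr.mpr hie, ?_⟩
      have : lineOf w e ∩ Z = {Sum.inl y, Sum.inr i} := by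
        ext x
        simp only [Finset.mem_inter, Finset.mem_insert, Finset.mem_singleton]
        constructor
        · rintro ⟨hx1, hx2⟩
          cases x with
          | inl u =>
            have := mem_lineOf_inl.mp hx1
            left; rw [← this, hwe]
          | inr v =>
            right; rw [(hZinr v).mp hx2]
        · rintro (rfl | rfl)
          · exact ⟨mem_lineOf_inl.mpr hwe, (hZinl y).mpr hy⟩
          · exact ⟨mem_lineOf_inr.mpr hie, (hZinr i).mpr rfl⟩
      rw [this, Finset.card_insert_of_notMem (by simp), Finset.card_singleton]
    · -- new and old point (symmetric)
      rw [Finset.mem_singleton] at ha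
      subst ha
      obtain ⟨y, hy, rfl⟩ := Finset.mem_image.mp hb
      obtain ⟨e, he, hie, hwe⟩ := hjoin y hy
      refine ⟨lineOf w e, Finset.mem_union_right _ (Finset.mem_image_of_mem _ he),
        mem_lineOf_inr.mpr hie, mem_lineOf_inl.mpr hwe, ?_⟩
      have : lineOf w e ∩ Z = {Sum.inl y, Sum.inr i} := by
        ext x
        simp only [Finset.mem_inter, Finset.mem_insert, Finset.mem_singleton]
        constructor
        · rintro ⟨hx1, hx2⟩
          cases x with
          | inl u =>
            have := mem_lineOf_inl.mp hx1
            left; rw [← this, hwe]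
          | inr v =>
            right; rw [(hZinr v).mp hx2]
        · rintro (rfl | rfl)
          · exact ⟨mem_lineOf_inl.mpr hwe, (hZinl y).mpr hy⟩
          · exact ⟨mem_lineOf_inr.mpr hie, (hZinr i).mpr rfl⟩
      rw [this, Finset.card_insert_of_notMem (by simp), Finset.card_singleton]
    · -- both equal to `inr i`, contradiction
      rw [Finset.mem_singleton] at ha hb
      exact absurd (ha.trans hb.symm) hab
  · -- sides meet inside Z
    intro L1 L2 hs1 hs2 hne p hp1 hp2
    have hside : ∀ L : Finset (Fin d ⊕ Fin n), IsSide (mkM N w hw1) Z L →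
        (∃ L0 ∈ N.lines, L = L0.image Sum.inl ∧ (L0 ∩ Y0).card = 2) ∨
        (∃ e ∈ Edges n, L = lineOf w e ∧ i ∈ e ∧ w e ∈ Y0) := by
      intro L hs
      rcases Finset.mem_union.mp hs.1 with h | h
      · obtain ⟨L0, hL0, rfl⟩ := Finset.mem_image.mp h
        left
        refine ⟨L0, hL0, rfl, ?_⟩
        have hc := hs.2
        rw [hZdef, old_inter_Z L0,
          Finset.card_image_of_injective _ Sum.inl_injective] at hc
        exact hc
      · obtain ⟨e, he, rfl⟩ := Finset.mem_image.mp h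
        right
        have hc := hs.2
        obtain ⟨h1, h2⟩ := hnewside e he hc
        exact ⟨e, he, rfl, h1, h2⟩
    rcases hside L1 hs1 with ⟨K1, hK1, rfl, hc1⟩ | ⟨e1, he1, rfl, hie1, hwe1⟩ <;>
      rcases hside L2 hs2 with ⟨K2, hK2, rfl, hc2⟩ | ⟨e2, he2, rfl, hie2, hwe2⟩
    · -- old / old
      cases p with
      | inr v => exact absurd hp1 (notMem_image_inl K1 v)
      | inl u =>
        have hKne : K1 ≠ K2 := fun h => hne (by rw [h])
        have := hY0f.2 K1 K2 ⟨hK1, hc1⟩ ⟨hK2, hc2⟩ hKne u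
          (mem_image_inl_iff.mp hp1) (mem_image_inl_iff.mp hp2)
        exact (hZinl u).mpr this
    · -- old / new
      cases p with
      | inr v => exact absurd hp1 (notMem_image_inl K1 v)
      | inl u =>
        have : w e2 = u := mem_lineOf_inl.mp hp2
        exact (hZinl u).mpr (this ▸ hwe2)
    · -- new / old
      cases p with
      | inr v => exact absurd hp2 (notMem_image_inl K2 v)
      | inl u =>
        have : w e1 = u := mem_lineOf_inl.mp hp1
        exact (hZinl u).mpr (this ▸ hwe1)
    · -- new / new
      cases p with
      | inl u =>
        exfalso
        have h1 : w e1 = u := mem_lineOf_inl.mp hp1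
        have h2 : w e2 = u := mem_lineOf_inl.mp hp2
        exact hne (by rw [hw1 he1 he2 (by rw [h1, h2])])
      | inr v =>
        by_cases hvi : v = i
        · rw [hvi]
          exact (hZinr i).mpr rfl
        · exfalso
          have hv1 : v ∈ e1 := mem_lineOf_inr.mp hp1
          have hv2 : v ∈ e2 := mem_lineOf_inr.mp hp2
          have he12 : e1 = e2 := by
            have hsub : ({i, v} : Finset (Fin n)) ⊆ e1 := by
              intro u hu
              rcases Finset.mem_insert.mp hu with rfl | hu
              · exact hie1
              · rw [Finset.mem_singleton.mp hu]; exact hv1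
            have hsub2 : ({i, v} : Finset (Fin n)) ⊆ e2 := by
              intro u hu
              rcases Finset.mem_insert.mp hu with rfl | hu
              · exact hie2
              · rw [Finset.mem_singleton.mp hu]; exact hv2
            have hc : ({i, v} : Finset (Fin n)).card = 2 := by
              rw [Finset.card_insert_of_notMem (by simpa using (Ne.symm hvi)),
                Finset.card_singleton]
            have h1 : ({i, v} : Finset (Fin n)) = e1 :=
              Finset.eq_of_subset_of_card_le hsub (by rw [mem_Edges.mp he1, hc])
            have h2 : ({i, v} : Finset (Fin n)) = e2 :=
              Finset.eq_of_subset_of_card_le hsub2 (by rw [mem_Edges.mp he2, hc])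
            rw [← h1, ← h2]
          exact hne (by rw [he12])

end Freely


section Classify

/-- Classification of the `K_n`-graphs freely contained in the extended
configuration. -/
lemma classify {n m : ℕ} (hn : 3 ≤ n)
    (N : PSTS (Fin (Nat.choose n 2))) (hNb : IsBinomial N n)
    (Y : Fin m → Finset (Fin (Nat.choose n 2)))
    (hYex : ∀ X, X.card = n - 1 → FreelyContains N X → ∃ k, X = Y k)
    (w : Finset (Fin n) → Fin (Nat.choose n 2))
    (hw1 : Set.InjOn w ↑(Edges n))
    (hw2 : (Edges n).image w = Finset.univ)
    (hw3 : ∀ (k : Fin m) (i : Fin n), (i : ℕ) = (k : ℕ) →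
      ((Edges n).filter (fun e => i ∈ e)).image w = Y k)
    (hw4 : ∀ i : Fin n, m ≤ (i : ℕ) → ∃ e ∈ Edges n, i ∈ e ∧ ∀ k, w e ∉ Y k)
    (Z : Finset (Fin (Nat.choose n 2) ⊕ Fin n)) (hZc : Z.card = n)
    (hZf : FreelyContains (mkM N w hw1) Z) :
    Z = (Finset.univ : Finset (Fin n)).image Sum.inr ∨
      ∃ (k : Fin m) (i : Fin n), (i : ℕ) = (k : ℕ) ∧
        Z = (Y k).image Sum.inl ∪ {Sum.inr i} := by
  classical
  set M := mkM N w hw1 with hMdef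
  have hMlines : M.lines = mkLines N w := rfl
  set WZ := Z.preimage Sum.inl Sum.inl_injective.injOn with hWZ
  set TZ := Z.preimage Sum.inr Sum.inr_injective.injOn with hTZ
  have hWZmem : ∀ u, u ∈ WZ ↔ Sum.inl u ∈ Z := fun u => Finset.mem_preimage
  have hTZmem : ∀ v, v ∈ TZ ↔ Sum.inr v ∈ Z := fun v => Finset.mem_preimage
  have hdecomp : Z = WZ.image Sum.inl ∪ TZ.image Sum.inr := by
    ext x
    rw [Finset.mem_union]
    cases x with
    | inl u =>
      constructor
      · intro h
        exact Or.inl (Finset.mem_image_of_mem _ ((hWZmem u).mpr h))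
      · rintro (h | h)
        · exact (hWZmem u).mp (mem_image_inl_iff.mp h)
        · exfalso
          obtain ⟨v, _, hv⟩ := Finset.mem_image.mp h
          exact absurd hv (by simp)
    | inr v =>
      constructor
      · intro h
        exact Or.inr (Finset.mem_image_of_mem _ ((hTZmem v).mpr h))
      · rintro (h | h)
        · exact absurd h (notMem_image_inl WZ v)
        · obtain ⟨v', hv', hve⟩ := Finset.mem_image.mp h
          exact (Sum.inr_injective hve) ▸ ((hTZmem v').mp hv')
  have hcards : WZ.card + TZ.card = n := by
    have hdisj : Disjoint (WZ.image (Sum.inl : _ → Fin (Nat.choose n 2) ⊕ Fin n))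
        (TZ.image Sum.inr) := by
      rw [Finset.disjoint_left]
      intro x hx1 hx2
      obtain ⟨u, _, rfl⟩ := Finset.mem_image.mp hx1
      obtain ⟨v, _, hv⟩ := Finset.mem_image.mp hx2
      exact absurd hv (by simp)
    have h := congrArg Finset.card hdecomp
    rw [Finset.card_union_of_disjoint hdisj,
      Finset.card_image_of_injective _ Sum.inl_injective,
      Finset.card_image_of_injective _ Sum.inr_injective, hZc] at h
    omega
  -- step A : TZ is nonempty
  have hTZne : TZ.Nonempty := by
    by_contra hTe
    rw [Finset.not_nonempty_iff_eq_empty] at hTe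
    have hZne : Z.Nonempty := Finset.card_pos.mp (by omega)
    obtain ⟨x, hx⟩ := hZne
    obtain ⟨z, rfl⟩ : ∃ z, x = Sum.inl z := by
      cases x with
      | inl z => exact ⟨z, rfl⟩
      | inr v =>
        exfalso
        have : v ∈ TZ := (hTZmem v).mpr hx
        rw [hTe] at this
        exact absurd this (Finset.notMem_empty v)
    have hrank : pointRank M (Sum.inl z) + 1 = Z.card := by
      rw [hMdef, mkM_pointRank_inl N w hw1 hw2 z, hNb.2.2 z, hZc]
      omega
    have hall := side_all M hZf hx hrank
    obtain ⟨e, he, hwe⟩ := Finset.mem_image.mp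
      (hw2 ▸ Finset.mem_univ z : z ∈ (Edges n).image w)
    have hL : lineOf w e ∈ M.lines :=
      Finset.mem_union_right _ (Finset.mem_image_of_mem _ he)
    have hc2 := hall (lineOf w e) hL (mem_lineOf_inl.mpr hwe)
    have hsub : lineOf w e ∩ Z ⊆ {Sum.inl z} := by
      intro x hx'
      obtain ⟨hx1, hx2⟩ := Finset.mem_inter.mp hx'
      cases x with
      | inl u =>
        rw [Finset.mem_singleton, ← (mem_lineOf_inl.mp hx1), hwe]
      | inr v =>
        exfalso
        have : v ∈ TZ := (hTZmem v).mpr hx2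
        rw [hTe] at this
        exact absurd this (Finset.notMem_empty v)
    have := Finset.card_le_card hsub
    rw [hc2, Finset.card_singleton] at this
    omega
  -- joining lines from inr points to inl points
  have hjoinline : ∀ z ∈ WZ, ∀ t ∈ TZ, ∃ e ∈ Edges n, t ∈ e ∧ w e = z := by
    intro z hz t ht
    obtain ⟨L, hL, h1, h2, _⟩ := hZf.1 (Sum.inl z) ((hWZmem z).mp hz)
      (Sum.inr t) ((hTZmem t).mp ht) (by simp)
    rcases Finset.mem_union.mp hL with h | h
    · exfalso
      obtain ⟨L0, _, rfl⟩ := Finset.mem_image.mp h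
      exact notMem_image_inl L0 t h2
    · obtain ⟨e, he, rfl⟩ := Finset.mem_image.mp h
      exact ⟨e, he, mem_lineOf_inr.mp h2, mem_lineOf_inl.mp h1⟩
  -- step B : if WZ is nonempty then TZ is a singleton
  have hTZone : WZ.Nonempty → TZ.card ≤ 1 := by
    rintro ⟨z, hz⟩
    by_contra hc
    push_neg at hc
    obtain ⟨t1, ht1, t2, ht2, htt⟩ := Finset.one_lt_card.mp hc
    obtain ⟨e1, he1, hte1, hwe1⟩ := hjoinline z hz t1 ht1
    obtain ⟨e2, he2, hte2, hwe2⟩ := hjoinline z hz t2 ht2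
    have he12 : e1 = e2 := hw1 he1 he2 (by rw [hwe1, hwe2])
    subst he12
    have hL : lineOf w e1 ∈ M.lines :=
      Finset.mem_union_right _ (Finset.mem_image_of_mem _ he1)
    obtain ⟨L', hL', h1', h2', hc2⟩ := hZf.1 (Sum.inr t1) ((hTZmem t1).mp ht1)
      (Sum.inr t2) ((hTZmem t2).mp ht2) (by simp [htt])
    have hLL : L' = lineOf w e1 := M.unique L' hL' (lineOf w e1) hL
      (Sum.inr t1) (Sum.inr t2) (by simp [htt]) h1' h2'
      (mem_lineOf_inr.mpr hte1) (mem_lineOf_inr.mpr hte2)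
    rw [hLL] at hc2
    have hsub : ({Sum.inl z, Sum.inr t1, Sum.inr t2} :
        Finset (Fin (Nat.choose n 2) ⊕ Fin n)) ⊆ lineOf w e1 ∩ Z := by
      intro x hx
      simp only [Finset.mem_insert, Finset.mem_singleton] at hx
      rcases hx with rfl | rfl | rfl
      · exact Finset.mem_inter.mpr ⟨mem_lineOf_inl.mpr hwe1, (hWZmem z).mp hz⟩
      · exact Finset.mem_inter.mpr ⟨mem_lineOf_inr.mpr hte1, (hTZmem t1).mp ht1⟩
      · exact Finset.mem_inter.mpr ⟨mem_lineOf_inr.mpr hte2, (hTZmem t2).mp ht2⟩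
    have hc3 : ({Sum.inl z, Sum.inr t1, Sum.inr t2} :
        Finset (Fin (Nat.choose n 2) ⊕ Fin n)).card = 3 := by
      rw [Finset.card_insert_of_notMem (by simp),
        Finset.card_insert_of_notMem (by simpa using htt), Finset.card_singleton]
    have := Finset.card_le_card hsub
    rw [hc2] at this
    omega
  -- case split on WZ
  by_cases hWe : WZ = ∅
  · -- Z = X
    left
    have hsub : Z ⊆ (Finset.univ : Finset (Fin n)).image Sum.inr := by
      intro x hx
      cases x with
      | inl u =>
        exfalso
        have : u ∈ WZ := (hWZmem u).mpr hx
        rw [hWe] at this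
        exact absurd this (Finset.notMem_empty u)
      | inr v => exact Finset.mem_image_of_mem _ (Finset.mem_univ v)
    apply Finset.eq_of_subset_of_card_le hsub
    rw [Finset.card_image_of_injective _ Sum.inr_injective, Finset.card_univ,
      Fintype.card_fin, hZc]
  · -- Z = Y_k ∪ {p_k}
    right
    have hWne : WZ.Nonempty := Finset.nonempty_of_ne_empty hWe
    have hTc : TZ.card = 1 := by
      have h1 := hTZone hWne
      have h2 := Finset.card_pos.mpr hTZne
      omega
    obtain ⟨i, hi⟩ := Finset.card_eq_one.mp hTc
    have hiTZ : i ∈ TZ := hi ▸ Finset.mem_singleton_self i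
    have hWc : WZ.card = n - 1 := by
      rw [hi] at hcards
      rw [Finset.card_singleton] at hcards
      omega
    -- WZ equals the star of i
    set star := ((Edges n).filter (fun e => i ∈ e)).image w with hstar
    have hsubset : (↑((Edges n).filter (fun e => i ∈ e)) : Set (Finset (Fin n))) ⊆
        ↑(Edges n) := by
      intro e he
      rw [Finset.mem_coe, Finset.mem_filter] at he
      exact Finset.mem_coe.mpr he.1
    have hstarc : star.card = n - 1 := by
      rw [hstar, Finset.card_image_of_injOn (hw1.mono hsubset), card_edges_at]
    have hWsub : WZ ⊆ star := by
      intro z hz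
      obtain ⟨e, he, hie, hwe⟩ := hjoinline z hz i hiTZ
      rw [hstar]
      exact Finset.mem_image.mpr ⟨e, Finset.mem_filter.mpr ⟨he, hie⟩, hwe⟩
    have hWeq : WZ = star := Finset.eq_of_subset_of_card_le hWsub (by omega)
    -- WZ is freely contained in N
    have hWfree : FreelyContains N WZ := by
      constructor
      · intro y hy y' hy' hyy
        obtain ⟨L, hL, h1, h2, hc2⟩ := hZf.1 (Sum.inl y) ((hWZmem y).mp hy)
          (Sum.inl y') ((hWZmem y').mp hy') (fun h => hyy (Sum.inl_injective h))
        rcases Finset.mem_union.mp hL with h | h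
        · obtain ⟨L0, hL0, rfl⟩ := Finset.mem_image.mp h
          refine ⟨L0, hL0, mem_image_inl_iff.mp h1, mem_image_inl_iff.mp h2, ?_⟩
          have hinter : (L0.image Sum.inl) ∩ Z = (L0 ∩ WZ).image Sum.inl := by
            ext x
            constructor
            · intro hx
              obtain ⟨hx1, hx2⟩ := Finset.mem_inter.mp hx
              obtain ⟨u, hu, rfl⟩ := Finset.mem_image.mp hx1
              exact Finset.mem_image_of_mem _
                (Finset.mem_inter.mpr ⟨hu, (hWZmem u).mpr hx2⟩)
            · intro hx
              obtain ⟨u, hu, rfl⟩ := Finset.mem_image.mp hx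
              obtain ⟨hu1, hu2⟩ := Finset.mem_inter.mp hu
              exact Finset.mem_inter.mpr
                ⟨Finset.mem_image_of_mem _ hu1, (hWZmem u).mp hu2⟩
          rw [hinter, Finset.card_image_of_injective _ Sum.inl_injective] at hc2
          exact hc2
        · exfalso
          obtain ⟨e, he, rfl⟩ := Finset.mem_image.mp h
          have hy1 : w e = y := mem_lineOf_inl.mp h1
          have hy2 : w e = y' := mem_lineOf_inl.mp h2
          exact hyy (hy1 ▸ hy2)
      · intro K1 K2 hs1 hs2 hKne x hx1 hx2
        have hsideM : ∀ K : Finset (Fin (Nat.choose n 2)), IsSide N WZ K →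
            IsSide M Z (K.image Sum.inl) := by
          intro K hs
          refine ⟨Finset.mem_union_left _ (Finset.mem_image_of_mem _ hs.1), ?_⟩
          have hinter : (K.image Sum.inl) ∩ Z = (K ∩ WZ).image Sum.inl := by
            ext x'
            constructor
            · intro hx
              obtain ⟨hxa, hxb⟩ := Finset.mem_inter.mp hx
              obtain ⟨u, hu, rfl⟩ := Finset.mem_image.mp hxa
              exact Finset.mem_image_of_mem _
                (Finset.mem_inter.mpr ⟨hu, (hWZmem u).mpr hxb⟩)
            · intro hx
              obtain ⟨u, hu, rfl⟩ := Finset.mem_image.mp hx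
              obtain ⟨hu1, hu2⟩ := Finset.mem_inter.mp hu
              exact Finset.mem_inter.mpr
                ⟨Finset.mem_image_of_mem _ hu1, (hWZmem u).mp hu2⟩
          rw [hinter, Finset.card_image_of_injective _ Sum.inl_injective]
          exact hs.2
        have := hZf.2 (K1.image Sum.inl) (K2.image Sum.inl)
          (hsideM K1 hs1) (hsideM K2 hs2)
          (fun h => hKne (inl_inj_finset h)) (Sum.inl x)
          (Finset.mem_image_of_mem _ hx1) (Finset.mem_image_of_mem _ hx2)
        exact (hWZmem x).mpr this
    obtain ⟨k, hk⟩ := hYex WZ (by omega) hWfree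
    -- the index i must be below m
    by_cases him : (i : ℕ) < m
    · refine ⟨⟨(i : ℕ), him⟩, i, rfl, ?_⟩
      have hstar3 := hw3 ⟨(i : ℕ), him⟩ i rfl
      have hYk : WZ = Y ⟨(i : ℕ), him⟩ := by
        rw [hWeq, hstar]; exact hstar3
      rw [hdecomp, hi, Finset.image_singleton, hYk]
    · exfalso
      push_neg at him
      obtain ⟨e, he, hie, hnot⟩ := hw4 i him
      have : w e ∈ star := Finset.mem_image_of_mem _ (Finset.mem_filter.mpr ⟨he, hie⟩)
      rw [← hWeq, hk] at this
      exact hnot k this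

end Classify


section Assemble

/-- Existence of a suitable labelling bijection `w`. -/
lemma exists_w {n m : ℕ} (hn : 3 ≤ n) (hm : m ≤ n - 2)
    (N : PSTS (Fin (Nat.choose n 2))) (hNb : IsBinomial N n)
    (Y : Fin m → Finset (Fin (Nat.choose n 2)))
    (hYinj : Function.Injective Y)
    (hYc : ∀ k, (Y k).card = n - 1)
    (hYf : ∀ k, FreelyContains N (Y k)) :
    ∃ w : Finset (Fin n) → Fin (Nat.choose n 2),
      Set.InjOn w ↑(Edges n) ∧ (Edges n).image w = Finset.univ ∧
      (∀ (k : Fin m) (i : Fin n), (i : ℕ) = (k : ℕ) →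
        ((Edges n).filter (fun e => i ∈ e)).image w = Y k) ∧
      (∀ i : Fin n, m ≤ (i : ℕ) → ∃ e ∈ Edges n, i ∈ e ∧ ∀ k, w e ∉ Y k) := by
  classical
  have hmn : m ≤ n := le_trans hm (Nat.sub_le n 2)
  have hd0 : 0 < Nat.choose n 2 := Nat.choose_pos (by omega)
  set junk : Fin (Nat.choose n 2) := ⟨0, hd0⟩ with hjunk
  have harith : Nat.choose n 2 = Nat.choose (n - 1) 2 + (n - 1) := by
    obtain ⟨p, rfl⟩ : ∃ p, n = p + 1 := ⟨n - 1, by omega⟩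
    have h1 : Nat.choose (p + 1) 2 = Nat.choose p 1 + Nat.choose p 2 :=
      Nat.choose_succ_succ p 1
    rw [h1, Nat.choose_one_right, Nat.add_sub_cancel]
    omega
  -- every line through a point of some Y k is a side of Y k
  have hallY : ∀ k, ∀ L ∈ N.lines, ∀ y ∈ Y k, y ∈ L → (L ∩ Y k).card = 2 := by
    intro k L hL y hy hyL
    exact side_all N (hYf k) hy (by rw [hNb.2.2, hYc]; omega) L hL hyL
  have hYne : ∀ k l : Fin m, k ≠ l → Y k ≠ Y l := fun k l h => hYinj.ne h
  have hsub2 : ∀ k l : Fin m, k ≠ l → ∀ x ∈ Y k ∩ Y l, ∀ y ∈ Y k ∩ Y l, x = y := by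
    intro k l hkl
    exact inter_subsingleton N (hYf k) (hYf l) (by rw [hYc, hYc]) (hYne k l hkl)
      (hallY l)
  have hne' : ∀ k l : Fin m, k ≠ l → (Y k ∩ Y l).Nonempty := by
    intro k l hkl
    exact inter_nonempty N (hYf k) (by rw [hYc, hYc]) (hYne k l hkl)
      (by rw [hYc, Fintype.card_fin]; exact harith) (hallY l)
  have htrip : ∀ k l r : Fin m, k ≠ l → k ≠ r → l ≠ r →
      ∀ x : Fin (Nat.choose n 2), x ∈ Y k → x ∈ Y l → x ∈ Y r → False := by
    intro k l r hkl hkr hlr x hxk hxl hxr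
    exact no_triple N hxk hxl hxr (by rw [hNb.2.2]; omega)
      (hallY k) (hallY l) (hallY r) (hsub2 k l hkl) (hsub2 k r hkr) (hsub2 l r hlr)
  -- the intersection points
  have hqex : ∀ k l : Fin m, ∃ x : Fin (Nat.choose n 2), k ≠ l → x ∈ Y k ∩ Y l := by
    intro k l
    by_cases h : k ≠ l
    · obtain ⟨x, hx⟩ := hne' k l h
      exact ⟨x, fun _ => hx⟩
    · exact ⟨junk, fun h' => absurd h' h⟩
  choose q hq using hqex
  have hqY : ∀ k l : Fin m, k ≠ l → q k l ∈ Y k ∧ q k l ∈ Y l := by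
    intro k l h
    exact Finset.mem_inter.mp (hq k l h)
  have hqsym : ∀ k l : Fin m, k ≠ l → q k l = q l k := by
    intro k l h
    refine hsub2 k l h (q k l) (hq k l h) (q l k) ?_
    have := hq l k (Ne.symm h)
    rw [Finset.inter_comm] at this
    exact this
  -- the sets Q k of intersection points on Y k
  set Q : Fin m → Finset (Fin (Nat.choose n 2)) :=
    fun k => (Finset.univ.erase k).image (fun l => q k l) with hQdef
  have hQmem : ∀ (k : Fin m) (x : Fin (Nat.choose n 2)),
      x ∈ Q k ↔ ∃ l : Fin m, l ≠ k ∧ q k l = x := by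
    intro k x
    simp only [hQdef, Finset.mem_image, Finset.mem_erase, Finset.mem_univ, and_true]
  have hQsub : ∀ k, Q k ⊆ Y k := by
    intro k x hx
    obtain ⟨l, hlk, rfl⟩ := (hQmem k x).mp hx
    exact (hqY k l (Ne.symm hlk)).1
  have hQcard : ∀ k, (Q k).card = m - 1 := by
    intro k
    rw [hQdef]
    rw [Finset.card_image_of_injOn, Finset.card_erase_of_mem (Finset.mem_univ k),
      Finset.card_univ, Fintype.card_fin]
    intro l hl l' hl' hll
    rw [Finset.mem_coe, Finset.mem_erase] at hl hl'
    by_contra hc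
    exact htrip l l' k hc (hl.1) (hl'.1) (q k l) (hqY k l (Ne.symm hl.1)).2
      (by have hll2 : q k l = q k l' := hll
          rw [hll2]; exact (hqY k l' (Ne.symm hl'.1)).2) (hqY k l (Ne.symm hl.1)).1
  have hYQcard : ∀ k : Fin m, (Y k \ Q k).card = n - m := by
    intro k
    have h0 : 0 < m := k.pos
    rw [Finset.card_sdiff_of_subset (hQsub k), hYc, hQcard]
    omega
  -- the high part of Fin n
  set rep : Fin m → Fin n := fun k => ⟨(k : ℕ), lt_of_lt_of_le k.2 hmn⟩ with hrep
  have hrepval : ∀ k : Fin m, ((rep k : Fin n) : ℕ) = (k : ℕ) := by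
    intro k
    rw [hrep]
  have hreplo : ∀ k : Fin m, ((rep k : Fin n) : ℕ) < m := by
    intro k
    rw [hrepval]
    exact k.2
  have hrepinj : Function.Injective rep := by
    intro k l h
    apply Fin.ext
    rw [← hrepval k, ← hrepval l, h]
  set Hi : Finset (Fin n) := Finset.univ.filter (fun j => m ≤ (j : ℕ)) with hHi
  have hHimem : ∀ j : Fin n, j ∈ Hi ↔ m ≤ (j : ℕ) := by
    intro j
    simp [hHi]
  have hHicard : Hi.card = n - m := by
    have hlo : Finset.univ.filter (fun j : Fin n => (j : ℕ) < m) =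
        Finset.univ.image rep := by
      ext j
      simp only [Finset.mem_filter, Finset.mem_univ, true_and, Finset.mem_image]
      constructor
      · intro h
        refine ⟨⟨(j : ℕ), h⟩, ?_⟩
        apply Fin.ext
        rw [hrepval]
      · rintro ⟨k, rfl⟩
        exact hreplo k
    have hsplit : Hi = Finset.univ \ Finset.univ.filter (fun j : Fin n => (j : ℕ) < m) := by
      ext j
      simp only [hHi, Finset.mem_filter, Finset.mem_univ, true_and, Finset.mem_sdiff]
      omega
    rw [hsplit, Finset.card_sdiff_of_subset (Finset.filter_subset _ _), hlo,
      Finset.card_image_of_injective _ hrepinj, Finset.card_univ, Finset.card_univ,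
      Fintype.card_fin, Fintype.card_fin]
  -- the bijections β k from Hi to Y k \ Q k
  have hβex : ∀ k : Fin m, ∃ b : Fin n → Fin (Nat.choose n 2),
      Set.InjOn b ↑Hi ∧ Hi.image b = Y k \ Q k := by
    intro k
    have hcc : Hi.card = (Y k \ Q k).card := by rw [hHicard, hYQcard]
    set eqv := Finset.equivOfCardEq hcc with heqv
    refine ⟨fun j => if h : j ∈ Hi then (eqv ⟨j, h⟩ : Fin (Nat.choose n 2)) else junk,
      ?_, ?_⟩
    · intro j hj j' hj' hjj
      rw [Finset.mem_coe] at hj hj'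
      simp only [dif_pos hj, dif_pos hj'] at hjj
      have := eqv.injective (Subtype.ext hjj)
      exact congrArg Subtype.val this
    · ext y
      constructor
      · intro hy
        obtain ⟨j, hj, hjy⟩ := Finset.mem_image.mp hy
        simp only [dif_pos hj] at hjy
        rw [← hjy]
        exact (eqv ⟨j, hj⟩).2
      · intro hy
        set x := eqv.symm ⟨y, hy⟩ with hx
        refine Finset.mem_image.mpr ⟨(x : Fin n), x.2, ?_⟩
        simp only [dif_pos x.2]
        have h2 : (⟨(x : Fin n), x.2⟩ : {j // j ∈ Hi}) = x := Subtype.coe_eta x x.2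
        rw [h2, hx]
        exact congrArg Subtype.val (Equiv.apply_symm_apply eqv ⟨y, hy⟩)
  choose β hβinj hβim using hβex
  have hβmem : ∀ (k : Fin m) (j : Fin n), j ∈ Hi → β k j ∈ Y k \ Q k := by
    intro k j hj
    rw [← hβim k]
    exact Finset.mem_image_of_mem _ hj
  -- injectivity facts for the values
  have hqinj : ∀ k l k' l' : Fin m, k ≠ l → k' ≠ l' → q k l = q k' l' →
      (k' = k ∧ l' = l) ∨ (k' = l ∧ l' = k) := by
    intro k l k' l' hkl hkl' heq
    have hor1 : k' = k ∨ k' = l := by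
      by_contra hc
      push_neg at hc
      refine htrip k l k' hkl (Ne.symm hc.1) (Ne.symm hc.2) (q k l)
        (hqY k l hkl).1 (hqY k l hkl).2 ?_
      rw [heq]
      exact (hqY k' l' hkl').1
    have hor2 : l' = k ∨ l' = l := by
      by_contra hc
      push_neg at hc
      refine htrip k l l' hkl (Ne.symm hc.1) (Ne.symm hc.2) (q k l)
        (hqY k l hkl).1 (hqY k l hkl).2 ?_
      rw [heq]
      exact (hqY k' l' hkl').2
    rcases hor1 with h1 | h1 <;> rcases hor2 with h2 | h2
    · exact absurd (h1.trans h2.symm) hkl'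
    · exact Or.inl ⟨h1, h2⟩
    · exact Or.inr ⟨h1, h2⟩
    · exact absurd (h1.trans h2.symm) hkl'
  have hqβ : ∀ (k l k'' : Fin m) (j : Fin n), k ≠ l → j ∈ Hi → q k l ≠ β k'' j := by
    intro k l k'' j hkl hj heq
    have hmem := hβmem k'' j hj
    rw [← heq] at hmem
    obtain ⟨hY'', hQ''⟩ := Finset.mem_sdiff.mp hmem
    by_cases h1 : k'' = k
    · subst h1
      exact hQ'' ((hQmem k'' _).mpr ⟨l, Ne.symm hkl, rfl⟩)
    · by_cases h2 : k'' = l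
      · subst h2
        exact hQ'' ((hQmem k'' _).mpr ⟨k, hkl, (hqsym k k'' hkl).symm⟩)
      · exact htrip k l k'' hkl (fun h => h1 h.symm) (fun h => h2 h.symm) (q k l)
          (hqY k l hkl).1 (hqY k l hkl).2 hY''
  have hββ : ∀ (k k' : Fin m) (j j' : Fin n), j ∈ Hi → j' ∈ Hi →
      β k j = β k' j' → k = k' ∧ j = j' := by
    intro k k' j j' hj hj' heq
    have hk : k = k' := by
      by_contra hkk
      have h1 := Finset.mem_sdiff.mp (hβmem k j hj)
      have h2 := Finset.mem_sdiff.mp (hβmem k' j' hj')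
      rw [← heq] at h2
      have : β k j = q k k' := hsub2 k k' hkk (β k j)
        (Finset.mem_inter.mpr ⟨h1.1, h2.1⟩) (q k k') (hq k k' hkk)
      exact h1.2 (this ▸ (hQmem k _).mpr ⟨k', Ne.symm hkk, rfl⟩)
    subst hk
    exact ⟨rfl, hβinj k (Finset.mem_coe.mpr hj) (Finset.mem_coe.mpr hj') heq⟩
  -- the low edges and the choice of w on them
  set EM : Finset (Finset (Fin n)) :=
    (Edges n).filter (fun e => ∃ x ∈ e, (x : ℕ) < m) with hEM
  have hEMsub : EM ⊆ Edges n := Finset.filter_subset _ _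
  have hpair2 : ∀ e ∈ Edges n, ∀ a b : Fin n, a ≠ b → a ∈ e → b ∈ e →
      e = {a, b} := by
    intro e he a b hab ha hb
    symm
    apply Finset.eq_of_subset_of_card_le
    · intro x hx
      rcases Finset.mem_insert.mp hx with rfl | hx
      · exact ha
      · rw [Finset.mem_singleton.mp hx]; exact hb
    · rw [mem_Edges.mp he, Finset.card_insert_of_notMem (by simpa using hab),
        Finset.card_singleton]
  have hrepHi : ∀ (k : Fin m) (j : Fin n), j ∈ Hi → rep k ≠ j := by
    intro k j hj heq
    have h1 : ((rep k : Fin n) : ℕ) < m := hreplo k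
    have h2 := (hHimem j).mp hj
    rw [heq] at h1
    omega
  have hspec : ∀ e : Finset (Fin n), ∃ y : Fin (Nat.choose n 2), e ∈ EM →
      (∃ k l : Fin m, k ≠ l ∧ rep k ∈ e ∧ rep l ∈ e ∧ y = q k l) ∨
      (∃ (k : Fin m) (j : Fin n), j ∈ Hi ∧ rep k ∈ e ∧ j ∈ e ∧ y = β k j) := by
    intro e
    by_cases he : e ∈ EM
    · obtain ⟨heE, x, hxe, hxm⟩ := Finset.mem_filter.mp he
      have hec : e.card = 2 := mem_Edges.mp heE
      have h1 : (e.erase x).card = 1 := by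
        rw [Finset.card_erase_of_mem hxe, hec]
      obtain ⟨b, hb⟩ := Finset.card_eq_one.mp h1
      have hbmem : b ∈ e.erase x := hb ▸ Finset.mem_singleton_self b
      have hbe : b ∈ e := Finset.mem_of_mem_erase hbmem
      have hbx : b ≠ x := (Finset.mem_erase.mp hbmem).1
      have hrk : rep ⟨(x : ℕ), hxm⟩ = x := by
        apply Fin.ext
        rw [hrepval]
      by_cases hbm : (b : ℕ) < m
      · refine ⟨q ⟨(x : ℕ), hxm⟩ ⟨(b : ℕ), hbm⟩, fun _ =>
          Or.inl ⟨⟨(x : ℕ), hxm⟩, ⟨(b : ℕ), hbm⟩, ?_, ?_, ?_, rfl⟩⟩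
        · intro hc
          apply hbx
          apply Fin.ext
          exact (congrArg Fin.val hc).symm
        · rw [hrk]; exact hxe
        · have hrb : rep ⟨(b : ℕ), hbm⟩ = b := by
            apply Fin.ext
            rw [hrepval]
          rw [hrb]; exact hbe
      · refine ⟨β ⟨(x : ℕ), hxm⟩ b, fun _ =>
          Or.inr ⟨⟨(x : ℕ), hxm⟩, b, ?_, ?_, hbe, rfl⟩⟩
        · exact (hHimem b).mpr (by omega)
        · rw [hrk]; exact hxe
    · exact ⟨junk, fun h => absurd h he⟩
  choose w1 hw1spec using hspec
  -- membership of values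
  set U : Finset (Fin (Nat.choose n 2)) := Finset.univ.biUnion (fun k => Y k) with hU
  have hUY : ∀ k : Fin m, Y k ⊆ U := by
    intro k x hx
    exact Finset.mem_biUnion.mpr ⟨k, Finset.mem_univ _, hx⟩
  have hP1 : ∀ e ∈ EM, w1 e ∈ U := by
    intro e he
    rcases hw1spec e he with ⟨k, l, hkl, -, -, hv⟩ | ⟨k, j, hj, -, -, hv⟩
    · rw [hv]; exact hUY k (hqY k l hkl).1
    · rw [hv]; exact hUY k (Finset.mem_sdiff.mp (hβmem k j hj)).1
  -- membership in a star
  have hPmem : ∀ (k : Fin m) (e : Finset (Fin n)), e ∈ EM → rep k ∈ e →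
      w1 e ∈ Y k := by
    intro k e he hke
    have heE := hEMsub he
    rcases hw1spec e he with ⟨k1, l1, hkl1, hk1, hl1, hv⟩ | ⟨k1, j1, hj1, hk1, hj1e, hv⟩
    · have hee : e = {rep k1, rep l1} :=
        hpair2 e heE _ _ (fun h => hkl1 (hrepinj h)) hk1 hl1
      have : rep k ∈ ({rep k1, rep l1} : Finset (Fin n)) := hee ▸ hke
      rcases Finset.mem_insert.mp this with h | h
      · rw [hv, hrepinj h]
        exact (hqY k1 l1 hkl1).1
      · rw [hv, hrepinj (Finset.mem_singleton.mp h)]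
        exact (hqY k1 l1 hkl1).2
    · have hee : e = {rep k1, j1} := hpair2 e heE _ _ (hrepHi k1 j1 hj1) hk1 hj1e
      have : rep k ∈ ({rep k1, j1} : Finset (Fin n)) := hee ▸ hke
      rcases Finset.mem_insert.mp this with h | h
      · rw [hv, hrepinj h]
        exact (Finset.mem_sdiff.mp (hβmem k1 j1 hj1)).1
      · exact absurd (Finset.mem_singleton.mp h) (hrepHi k j1 hj1)
  -- every point of Y k is the value of an edge through rep k
  have hPstar : ∀ (k : Fin m) (y : Fin (Nat.choose n 2)), y ∈ Y k →
      ∃ e, e ∈ EM ∧ rep k ∈ e ∧ w1 e = y := by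
    intro k y hy
    by_cases hyQ : y ∈ Q k
    · obtain ⟨l, hlk, hql⟩ := (hQmem k y).mp hyQ
      have hkl : k ≠ l := Ne.symm hlk
      have hrkl : rep k ≠ rep l := fun h => hkl (hrepinj h)
      have heE : ({rep k, rep l} : Finset (Fin n)) ∈ Edges n := by
        rw [mem_Edges, Finset.card_insert_of_notMem (by simpa using hrkl),
          Finset.card_singleton]
      have heEM : ({rep k, rep l} : Finset (Fin n)) ∈ EM :=
        Finset.mem_filter.mpr ⟨heE, rep k, Finset.mem_insert_self _ _, hreplo k⟩
      refine ⟨{rep k, rep l}, heEM, Finset.mem_insert_self _ _, ?_⟩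
      rcases hw1spec _ heEM with ⟨k1, l1, hkl1, hk1, hl1, hv⟩ | ⟨k1, j1, hj1, -, hj1e, -⟩
      · -- the chosen pair must be {k, l}
        have hk1' : k1 = k ∨ k1 = l := by
          rcases Finset.mem_insert.mp hk1 with h | h
          · exact Or.inl (hrepinj h)
          · exact Or.inr (hrepinj (Finset.mem_singleton.mp h))
        have hl1' : l1 = k ∨ l1 = l := by
          rcases Finset.mem_insert.mp hl1 with h | h
          · exact Or.inl (hrepinj h)
          · exact Or.inr (hrepinj (Finset.mem_singleton.mp h))
        rcases hk1' with h1 | h1 <;> rcases hl1' with h2 | h2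
        · exact absurd (h1.trans h2.symm) hkl1
        · rw [hv, h1, h2]; exact hql
        · rw [hv, h1, h2, ← hqsym k l hkl]; exact hql
        · exact absurd (h1.trans h2.symm) hkl1
      · exfalso
        rcases Finset.mem_insert.mp hj1e with h | h
        · exact hrepHi k j1 hj1 h.symm
        · exact hrepHi l j1 hj1 (Finset.mem_singleton.mp h).symm
    · have hyYQ : y ∈ Y k \ Q k := Finset.mem_sdiff.mpr ⟨hy, hyQ⟩
      rw [← hβim k] at hyYQ
      obtain ⟨j, hj, hjy⟩ := Finset.mem_image.mp hyYQ
      have hrkj : rep k ≠ j := hrepHi k j hj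
      have heE : ({rep k, j} : Finset (Fin n)) ∈ Edges n := by
        rw [mem_Edges, Finset.card_insert_of_notMem (by simpa using hrkj),
          Finset.card_singleton]
      have heEM : ({rep k, j} : Finset (Fin n)) ∈ EM :=
        Finset.mem_filter.mpr ⟨heE, rep k, Finset.mem_insert_self _ _, hreplo k⟩
      refine ⟨{rep k, j}, heEM, Finset.mem_insert_self _ _, ?_⟩
      rcases hw1spec _ heEM with ⟨k1, l1, hkl1, hk1, hl1, hv⟩ | ⟨k1, j1, hj1, hk1, hj1e, hv⟩
      · exfalso
        have hk1' : rep k1 = rep k := by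
          rcases Finset.mem_insert.mp hk1 with h | h
          · exact h
          · exact absurd (Finset.mem_singleton.mp h) (hrepHi k1 j hj)
        have hl1' : rep l1 = rep k := by
          rcases Finset.mem_insert.mp hl1 with h | h
          · exact h
          · exact absurd (Finset.mem_singleton.mp h) (hrepHi l1 j hj)
        exact hkl1 (hrepinj (hk1'.trans hl1'.symm))
      · have hk1' : k1 = k := by
          rcases Finset.mem_insert.mp hk1 with h | h
          · exact hrepinj h
          · exact absurd (Finset.mem_singleton.mp h) (hrepHi k1 j hj)
        have hj1' : j1 = j := by
          rcases Finset.mem_insert.mp hj1e with h | h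
          · exact absurd h.symm (hrepHi k j1 hj1)
          · exact Finset.mem_singleton.mp h
        rw [hv, hk1', hj1', hjy]
  -- injectivity of w1 on EM
  have hP2 : Set.InjOn w1 ↑EM := by
    intro e he e' he' hee
    rw [Finset.mem_coe] at he he'
    have heE := hEMsub he
    have heE' := hEMsub he'
    rcases hw1spec e he with ⟨k, l, hkl, hk, hl, hv⟩ | ⟨k, j, hj, hk, hje, hv⟩ <;>
      rcases hw1spec e' he' with ⟨k', l', hkl', hk', hl', hv'⟩ | ⟨k', j', hj', hk'', hje', hv'⟩
    · have heq : q k l = q k' l' := by rw [← hv, ← hv', hee]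
      have hee1 : e = {rep k, rep l} :=
        hpair2 e heE _ _ (fun h => hkl (hrepinj h)) hk hl
      have hee2 : e' = {rep k', rep l'} :=
        hpair2 e' heE' _ _ (fun h => hkl' (hrepinj h)) hk' hl'
      rcases hqinj k l k' l' hkl hkl' heq with ⟨rfl, rfl⟩ | ⟨rfl, rfl⟩
      · rw [hee1, hee2]
      · rw [hee1, hee2, Finset.pair_comm]
    · exact absurd (by rw [← hv, ← hv', hee]) (hqβ k l k' j' hkl hj')
    · exact absurd (by rw [← hv', ← hv, hee]) (hqβ k' l' k j hkl' hj)
    · have heq : β k j = β k' j' := by rw [← hv, ← hv', hee]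
      obtain ⟨rfl, rfl⟩ := hββ k k' j j' hj hj' heq
      have hee1 : e = {rep k, j} := hpair2 e heE _ _ (hrepHi k j hj) hk hje
      have hee2 : e' = {rep k, j} := hpair2 e' heE' _ _ (hrepHi k j hj) hk'' hje'
      rw [hee1, hee2]
  -- the image of EM is U
  have hP3 : EM.image w1 = U := by
    ext y
    constructor
    · intro hy
      obtain ⟨e, he, rfl⟩ := Finset.mem_image.mp hy
      exact hP1 e he
    · intro hy
      obtain ⟨k, -, hk⟩ := Finset.mem_biUnion.mp hy
      obtain ⟨e, he, -, hv⟩ := hPstar k y hk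
      exact Finset.mem_image.mpr ⟨e, he, hv⟩
  -- the complementary bijection
  set E3 : Finset (Finset (Fin n)) := Edges n \ EM with hE3
  set R : Finset (Fin (Nat.choose n 2)) := Finset.univ \ U with hR
  have hE3card : E3.card = R.card := by
    have h1 : EM.card = U.card := by
      rw [← hP3, Finset.card_image_of_injOn hP2]
    have h2 : (Edges n).card = Fintype.card (Fin (Nat.choose n 2)) := by
      rw [card_Edges, Fintype.card_fin]
    have h3 : U.card ≤ Fintype.card (Fin (Nat.choose n 2)) := by
      rw [← Finset.card_univ]
      exact Finset.card_le_card (Finset.subset_univ U)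
    rw [hE3, hR, Finset.card_sdiff_of_subset hEMsub, Finset.card_sdiff_of_subset (Finset.subset_univ U),
      Finset.card_univ]
    omega
  set γ := Finset.equivOfCardEq hE3card with hγ
  set w : Finset (Fin n) → Fin (Nat.choose n 2) := fun e =>
    if heEM : e ∈ EM then w1 e
    else if h3 : e ∈ E3 then (γ ⟨e, h3⟩ : Fin (Nat.choose n 2)) else junk with hw
  have hwEM : ∀ e ∈ EM, w e = w1 e := by
    intro e he
    simp only [hw]
    rw [dif_pos he]
  have hwE3 : ∀ (e : Finset (Fin n)) (h3 : e ∈ E3),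
      w e = (γ ⟨e, h3⟩ : Fin (Nat.choose n 2)) := by
    intro e h3
    have hnEM : e ∉ EM := (Finset.mem_sdiff.mp h3).2
    simp only [hw]
    rw [dif_neg hnEM, dif_pos h3]
  have hwE3R : ∀ (e : Finset (Fin n)) (h3 : e ∈ E3), w e ∈ R := by
    intro e h3
    rw [hwE3 e h3]
    exact (γ ⟨e, h3⟩).2
  have hsplitE : ∀ e ∈ Edges n, e ∈ EM ∨ e ∈ E3 := by
    intro e he
    by_cases h : e ∈ EM
    · exact Or.inl h
    · exact Or.inr (Finset.mem_sdiff.mpr ⟨he, h⟩)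
  refine ⟨w, ?_, ?_, ?_, ?_⟩
  · -- injectivity
    intro e he e' he' hee
    rw [Finset.mem_coe] at he he'
    rcases hsplitE e he with h1 | h1 <;> rcases hsplitE e' he' with h2 | h2
    · rw [hwEM e h1, hwEM e' h2] at hee
      exact hP2 (Finset.mem_coe.mpr h1) (Finset.mem_coe.mpr h2) hee
    · exfalso
      rw [hwEM e h1, hwE3 e' h2] at hee
      have hU1 : w1 e ∈ U := hP1 e h1
      have hR2 := (γ ⟨e', h2⟩).2
      rw [← hee] at hR2
      exact (Finset.mem_sdiff.mp hR2).2 hU1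
    · exfalso
      rw [hwEM e' h2, hwE3 e h1] at hee
      have hU1 : w1 e' ∈ U := hP1 e' h2
      have hR2 := (γ ⟨e, h1⟩).2
      rw [hee] at hR2
      exact (Finset.mem_sdiff.mp hR2).2 hU1
    · rw [hwE3 e h1, hwE3 e' h2] at hee
      have := γ.injective (Subtype.ext hee)
      exact congrArg Subtype.val this
  · -- surjectivity
    apply Finset.eq_univ_of_forall
    intro y
    by_cases hy : y ∈ U
    · rw [← hP3] at hy
      obtain ⟨e, he, hv⟩ := Finset.mem_image.mp hy
      exact Finset.mem_image.mpr ⟨e, hEMsub he, by rw [hwEM e he]; exact hv⟩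
    · have hyR : y ∈ R := Finset.mem_sdiff.mpr ⟨Finset.mem_univ _, hy⟩
      set x := γ.symm ⟨y, hyR⟩ with hx
      refine Finset.mem_image.mpr ⟨(x : Finset (Fin n)),
        (Finset.mem_sdiff.mp x.2).1, ?_⟩
      rw [hwE3 _ x.2]
      have h1 : (⟨(x : Finset (Fin n)), x.2⟩ : {e // e ∈ E3}) = x :=
        Subtype.coe_eta x x.2
      rw [h1, hx]
      exact congrArg Subtype.val (Equiv.apply_symm_apply γ ⟨y, hyR⟩)
  · -- the stars over the low indices
    intro k i hik
    have him : (i : ℕ) < m := by rw [hik]; exact k.2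
    have hirep : i = rep k := Fin.ext (by rw [hik, hrepval])
    have hfsub : ∀ e ∈ (Edges n).filter (fun e => i ∈ e), e ∈ EM := by
      intro e he
      obtain ⟨h1, h2⟩ := Finset.mem_filter.mp he
      exact Finset.mem_filter.mpr ⟨h1, i, h2, him⟩
    have himg : ((Edges n).filter (fun e => i ∈ e)).image w =
        ((Edges n).filter (fun e => i ∈ e)).image w1 := by
      apply Finset.image_congr
      intro e he
      rw [Finset.mem_coe] at he
      exact hwEM e (hfsub e he)
    rw [himg]
    ext y
    constructor
    · intro hy
      obtain ⟨e, he, rfl⟩ := Finset.mem_image.mp hy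
      have heEM := hfsub e he
      have hie : i ∈ e := (Finset.mem_filter.mp he).2
      rw [hirep] at hie
      exact hPmem k e heEM hie
    · intro hy
      obtain ⟨e, he, hke, hv⟩ := hPstar k y hy
      refine Finset.mem_image.mpr ⟨e, Finset.mem_filter.mpr ⟨hEMsub he, ?_⟩, hv⟩
      rw [hirep]
      exact hke
  · -- edges avoiding all the Y k
    intro i him
    have hiHi : i ∈ Hi := (hHimem i).mpr him
    have hcard : 1 ≤ (Hi.erase i).card := by
      rw [Finset.card_erase_of_mem hiHi, hHicard]
      omega
    obtain ⟨j, hj⟩ := Finset.card_pos.mp (lt_of_lt_of_le Nat.zero_lt_one hcard)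
    have hjHi : j ∈ Hi := Finset.mem_of_mem_erase hj
    have hji : j ≠ i := (Finset.mem_erase.mp hj).1
    have heE : ({i, j} : Finset (Fin n)) ∈ Edges n := by
      rw [mem_Edges, Finset.card_insert_of_notMem (by simpa using (Ne.symm hji)),
        Finset.card_singleton]
    have hnEM : ({i, j} : Finset (Fin n)) ∉ EM := by
      intro hc
      obtain ⟨-, x, hxe, hxm⟩ := Finset.mem_filter.mp hc
      rcases Finset.mem_insert.mp hxe with rfl | hxe
      · omega
      · rw [Finset.mem_singleton.mp hxe] at hxm
        have := (hHimem j).mp hjHi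
        omega
    have h3 : ({i, j} : Finset (Fin n)) ∈ E3 := Finset.mem_sdiff.mpr ⟨heE, hnEM⟩
    refine ⟨{i, j}, heE, Finset.mem_insert_self _ _, ?_⟩
    intro k hk
    have hyR := hwE3R _ h3
    exact (Finset.mem_sdiff.mp hyR).2 (hUY k hk)

/-- The extended configuration on the sum type has the required parameters. -/
lemma assemble {n m : ℕ} (hn : 3 ≤ n) (hm : m ≤ n - 2)
    (N : PSTS (Fin (Nat.choose n 2))) (hNb : IsBinomial N n)
    (Y : Fin m → Finset (Fin (Nat.choose n 2)))
    (hYc : ∀ k, (Y k).card = n - 1)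
    (hYf : ∀ k, FreelyContains N (Y k))
    (hYex : ∀ X, X.card = n - 1 → FreelyContains N X → ∃ k, X = Y k)
    (w : Finset (Fin n) → Fin (Nat.choose n 2))
    (hw1 : Set.InjOn w ↑(Edges n))
    (hw2 : (Edges n).image w = Finset.univ)
    (hw3 : ∀ (k : Fin m) (i : Fin n), (i : ℕ) = (k : ℕ) →
      ((Edges n).filter (fun e => i ∈ e)).image w = Y k)
    (hw4 : ∀ i : Fin n, m ≤ (i : ℕ) → ∃ e ∈ Edges n, i ∈ e ∧ ∀ k, w e ∉ Y k) :
    ∃ M : PSTS (Fin (Nat.choose n 2) ⊕ Fin n),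
      IsBinomial M (n + 1) ∧ ExactlyKGraphs M n (m + 1) := by
  classical
  have hmn : m ≤ n := le_trans hm (Nat.sub_le n 2)
  refine ⟨mkM N w hw1, mkM_isBinomial rfl N hNb w hw1 hw2 hn, ?_⟩
  set X := ((Finset.univ : Finset (Fin n)).image Sum.inr :
    Finset (Fin (Nat.choose n 2) ⊕ Fin n)) with hX
  have hXinl : ∀ u : Fin (Nat.choose n 2), Sum.inl u ∉ X := by
    intro u hu
    obtain ⟨v, _, hv⟩ := Finset.mem_image.mp hu
    exact absurd hv (by simp)
  set rep : Fin m → Fin n := fun k => ⟨(k : ℕ), lt_of_lt_of_le k.2 hmn⟩ with hrep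
  set Zf : Fin (m + 1) → Finset (Fin (Nat.choose n 2) ⊕ Fin n) := fun j =>
    if h : (j : ℕ) < m then
      (Y ⟨(j : ℕ), h⟩).image Sum.inl ∪ {Sum.inr (rep ⟨(j : ℕ), h⟩)}
    else X with hZf
  have hZval : ∀ (j : Fin (m + 1)) (h : (j : ℕ) < m),
      Zf j = (Y ⟨(j : ℕ), h⟩).image Sum.inl ∪ {Sum.inr (rep ⟨(j : ℕ), h⟩)} := by
    intro j h
    rw [hZf]
    exact dif_pos h
  have hZlast : ∀ (j : Fin (m + 1)), ¬ ((j : ℕ) < m) → Zf j = X := by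
    intro j h
    rw [hZf]
    exact dif_neg h
  have hYne : ∀ k : Fin m, (Y k).Nonempty := by
    intro k
    rw [← Finset.card_pos, hYc k]
    omega
  refine ⟨Zf, ?_, ?_, ?_⟩
  · -- injectivity
    intro j j' hjj
    by_cases h : (j : ℕ) < m <;> by_cases h' : (j' : ℕ) < m
    · have h1 := hZval j h
      have h2 := hZval j' h'
      rw [hjj] at h1
      rw [h1] at h2
      have : Sum.inr (rep ⟨(j : ℕ), h⟩) ∈
          (Y ⟨(j' : ℕ), h'⟩).image Sum.inl ∪ {Sum.inr (rep ⟨(j' : ℕ), h'⟩)} := by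
        rw [← h2]
        exact Finset.mem_union_right _ (Finset.mem_singleton_self _)
      rcases Finset.mem_union.mp this with hc | hc
      · exfalso
        obtain ⟨u, _, hu⟩ := Finset.mem_image.mp hc
        exact absurd hu (by simp)
      · rw [Finset.mem_singleton] at hc
        have := Sum.inr_injective hc
        have hvv : (j : ℕ) = (j' : ℕ) := by
          have := congrArg Fin.val this
          simpa [hrep] using this
        exact Fin.ext hvv
    · exfalso
      obtain ⟨y, hy⟩ := hYne ⟨(j : ℕ), h⟩
      have : Sum.inl y ∈ Zf j := by
        rw [hZval j h]
        exact Finset.mem_union_left _ (Finset.mem_image_of_mem _ hy)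
      rw [hjj, hZlast j' h'] at this
      exact hXinl y this
    · exfalso
      obtain ⟨y, hy⟩ := hYne ⟨(j' : ℕ), h'⟩
      have : Sum.inl y ∈ Zf j' := by
        rw [hZval j' h']
        exact Finset.mem_union_left _ (Finset.mem_image_of_mem _ hy)
      rw [← hjj, hZlast j h] at this
      exact hXinl y this
    · have hj : (j : ℕ) = m := by omega
      have hj' : (j' : ℕ) = m := by omega
      exact Fin.ext (hj.trans hj'.symm)
  · -- card and freely contained
    intro j
    by_cases h : (j : ℕ) < m
    · rw [hZval j h]
      constructor
      · rw [Finset.card_union_of_disjoint (by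
          rw [Finset.disjoint_singleton_right]
          intro hc
          obtain ⟨u, _, hu⟩ := Finset.mem_image.mp hc
          exact absurd hu (by simp)),
          Finset.card_image_of_injective _ Sum.inl_injective, hYc,
          Finset.card_singleton]
        omega
      · exact freely_Z N w hw1 (Y ⟨(j : ℕ), h⟩) (hYf _) (rep ⟨(j : ℕ), h⟩)
          (hw3 ⟨(j : ℕ), h⟩ (rep ⟨(j : ℕ), h⟩) rfl)
    · rw [hZlast j h]
      constructor
      · rw [hX, Finset.card_image_of_injective _ Sum.inr_injective,
          Finset.card_univ, Fintype.card_fin]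
      · exact freely_X N w hw1
  · -- exactness
    intro Z hZc hZf'
    rcases classify hn N hNb Y hYex w hw1 hw2 hw3 hw4 Z hZc hZf' with h | ⟨k, i, hik, h⟩
    · refine ⟨Fin.last m, ?_⟩
      rw [hZlast (Fin.last m) (by simp [Fin.val_last])]
      exact h
    · have hkm : (k : ℕ) < m := k.2
      refine ⟨⟨(k : ℕ), lt_of_lt_of_le hkm (Nat.le_succ m)⟩, ?_⟩
      have hlt : ((⟨(k : ℕ), lt_of_lt_of_le hkm (Nat.le_succ m)⟩ : Fin (m + 1)) : ℕ) < m :=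
        hkm
      rw [hZval _ hlt]
      have hYY : Y ⟨(k : ℕ), hlt⟩ = Y k := by
        congr 1
      have hrr : rep ⟨(k : ℕ), hlt⟩ = i := by
        apply Fin.ext
        simp only [hrep]
        exact hik.symm
      rw [hYY, hrr]
      exact h

end Assemble

/-- If there is a B(n)-configuration freely containing exactly m
K_{n-1}-graphs with m ≤ n-2, then there is a B(n+1)-configuration freely
containing exactly m+1 K_n-graphs. -/
theorem stmt_16 (n m : ℕ) (hm : m ≤ n - 2)
    (h : ∃ N : PSTS (Fin (Nat.choose n 2)), IsBinomial N n ∧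
      ExactlyKGraphs N (n - 1) m) :
    ∃ M : PSTS (Fin (Nat.choose (n + 1) 2)), IsBinomial M (n + 1) ∧
      ExactlyKGraphs M n (m + 1) := by
  classical
  obtain ⟨N, hNb, hNk⟩ := h
  obtain ⟨f, hfinj, hfprop, hfex⟩ := hNk
  rcases Nat.lt_or_ge n 3 with hn | hn
  · -- degenerate cases : the hypothesis is contradictory
    exfalso
    have hm0 : m = 0 := by omega
    subst hm0
    -- there is a freely contained set of cardinality n - 1
    have hsmall : n - 1 ≤ Fintype.card (Fin (Nat.choose n 2)) := by
      rw [Fintype.card_fin]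
      interval_cases n <;> simp
    obtain ⟨X, -, hXc⟩ := Finset.exists_subset_card_eq
      (le_trans hsmall (le_of_eq (Finset.card_univ).symm))
    have hXfree : FreelyContains N X := by
      constructor
      · intro a ha b hb hab
        exfalso
        have : X.card ≤ 1 := by omega
        exact hab (Finset.card_le_one.mp this a ha b hb)
      · intro L1 L2 hs1 hs2 hne p hp1 hp2
        exfalso
        have h1 : L1 ∩ X ⊆ X := Finset.inter_subset_right
        have := Finset.card_le_card h1
        rw [hs1.2] at this
        omega
    obtain ⟨i, -⟩ := hfex X hXc hXfree
    exact Fin.elim0 i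
  · -- main construction
    obtain ⟨w, hw1, hw2, hw3, hw4⟩ := exists_w hn hm N hNb f hfinj
      (fun k => (hfprop k).1) (fun k => (hfprop k).2)
    obtain ⟨M0, hM0b, hM0k⟩ := assemble hn hm N hNb f
      (fun k => (hfprop k).1) (fun k => (hfprop k).2) hfex w hw1 hw2 hw3 hw4
    have hcc : Fintype.card (Fin (Nat.choose n 2) ⊕ Fin n) =
        Fintype.card (Fin (Nat.choose (n + 1) 2)) := by
      rw [Fintype.card_sum, Fintype.card_fin, Fintype.card_fin, Fintype.card_fin]
      have h1 : Nat.choose (n + 1) 2 = Nat.choose n 1 + Nat.choose n 2 :=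
        Nat.choose_succ_succ n 1
      rw [h1, Nat.choose_one_right]
      omega
    let e := Fintype.equivOfCardEq hcc
    exact ⟨M0.map e, isBinomial_map e M0 (n + 1) hM0b, exactly_map e M0 n (m + 1) hM0k⟩
end
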